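/- arXiv:1505.06661 — 8 statements merged into one kernel-verified Lean document; each statement's English description precedes it below -/
import Mathlib

section
/- Exact penalty theorem: Assume assoc_S(A) > 0 for every nonempty A ⊆ V'. Let A_0 ⊆ V' be feasible and let θ > 0 satisfy pen(A) ≥ θ for every nonempty infeasible A ⊆ V'. If γ > (vol_d(V)/θ)·(vol_g(A_0) + ν_S)/assoc_S(A_0), where vol_d(V) = ∑_{i∈V} d(i), then every minimizer over nonempty subsets A ⊆ V' of F_γ(A) := (vol_g(A) + ν_S + γ·pen(A))/assoc_S(A) is feasible; moreover min_{∅≠A⊆V'} F_γ(A) = min over feasible A of (vol_g(A) + ν_S)/assoc_S(A), and the minimizers of F_γ are exactly the feasible sets maximizing assoc_S(A)/(vol_g(A) + ν_S). -/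
/-!
Every `assoc_S(A)` is at most `vol_d(V)`, so a nonempty infeasible set, whose penalty is at least
`θ`, has `F_γ(A) ≥ γθ / vol_d(V)`, and the choice of `γ` makes this exceed `F_γ(A₀)`. Hence every
minimizer of `F_γ` is feasible, and on feasible sets `F_γ` is the unpenalized ratio; all three
claims follow from this comparison alone.
-/

open Finset

/-- `Vp S` is the set of experts `V' = V \ S`, as a subtype. -/
abbrev Vp {V : Type*} [Fintype V] [DecidableEq V] (S : Finset V) := {x : V // x ∉ S}

section Minimizers

variable {ι : Type*} {s t : Set ι}

theorem isMinOn_iff_of_eqOn_of_lt {β : Type*} [LinearOrder β] {F G : ι → β} (hts : t ⊆ s)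
    (hFG : Set.EqOn F G t) {a₀ : ι} (ha₀ : a₀ ∈ t) (hlt : ∀ b ∈ s \ t, F a₀ < F b)
    {a : ι} (ha : a ∈ s) :
    IsMinOn F s a ↔ a ∈ t ∧ IsMinOn G t a := by
  constructor
  · intro hmin
    have hat : a ∈ t := by
      by_contra hat
      exact (hlt a ⟨ha, hat⟩).not_ge (hmin (hts ha₀))
    refine ⟨hat, fun b hb => ?_⟩
    calc G a = F a := (hFG hat).symm
      _ ≤ F b := hmin (hts hb)
      _ = G b := hFG hb
  · rintro ⟨hat, hmin⟩ b hb
    by_cases hbt : b ∈ t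
    · calc F a = G a := hFG hat
        _ ≤ G b := hmin hbt
        _ = F b := (hFG hbt).symm
    · calc F a = G a := hFG hat
        _ ≤ G a₀ := hmin ha₀
        _ = F a₀ := (hFG ha₀).symm
        _ ≤ F b := (hlt b ⟨hb, hbt⟩).le

theorem csInf_image_eq_of_eqOn_of_lt {β : Type*} [ConditionallyCompleteLinearOrder β]
    {F G : ι → β} (ht : t.Finite) (hts : t ⊆ s) (hFG : Set.EqOn F G t) {a₀ : ι} (ha₀ : a₀ ∈ t)
    (hlt : ∀ b ∈ s \ t, F a₀ < F b) :
    sInf (F '' s) = sInf (G '' t) := by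
  obtain ⟨a, hat, hmin⟩ := t.exists_min_image G ht ⟨a₀, ha₀⟩
  have hminF : IsMinOn F s a :=
    (isMinOn_iff_of_eqOn_of_lt hts hFG ha₀ hlt (hts hat)).2 ⟨hat, hmin⟩
  have hleastF : IsLeast (F '' s) (F a) :=
    ⟨⟨a, hts hat, rfl⟩, by rintro _ ⟨b, hb, rfl⟩; exact hminF hb⟩
  have hleastG : IsLeast (G '' t) (G a) :=
    ⟨⟨a, hat, rfl⟩, by rintro _ ⟨b, hb, rfl⟩; exact hmin b hb⟩
  rw [hleastF.csInf_eq, hleastG.csInf_eq, hFG hat]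

end Minimizers

theorem lt_add_mul_div_of_mul_lt {r f a D θ γ π : ℝ} (hr : 0 ≤ r) (hf : 0 ≤ f) (ha : 0 < a)
    (haD : a ≤ D) (hθ : 0 < θ) (hθπ : θ ≤ π) (hγ : D / θ * r < γ) :
    r < (f + γ * π) / a := by
  have hDr : D * r < γ * θ := by
    rwa [div_mul_eq_mul_div, div_lt_iff₀ hθ] at hγ
  have hγ : 0 ≤ γ := by
    by_contra! hγ
    nlinarith [mul_nonneg (ha.le.trans haD) hr]
  rw [lt_div_iff₀ ha]
  nlinarith [mul_le_mul_of_nonneg_left haD hr, mul_le_mul_of_nonneg_left hθπ hγ]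

section Penalty

variable {ι α : Type*} [Fintype ι] [DecidableEq α] (M : ι → α → ℝ) (k l : ι → ℝ)
  (dist : α → α → ℝ) (d0 : ℝ)

def penalty (A : Finset α) : ℝ :=
  if A = ∅ then 0 else
    (∑ j, max 0 ((∑ i ∈ A, M j i) - l j)) + (∑ j, max 0 (k j - ∑ i ∈ A, M j i))
      + ∑ u ∈ A, ∑ v ∈ A, max 0 (dist u v - d0)

def IsFeasible (A : Finset α) : Prop :=
  A.Nonempty ∧ (∀ j, k j ≤ (∑ i ∈ A, M j i) ∧ (∑ i ∈ A, M j i) ≤ l j)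
    ∧ ∀ u ∈ A, ∀ v ∈ A, dist u v ≤ d0

variable {M k l dist d0} in
theorem penalty_eq_zero_of_isFeasible {A : Finset α} (hA : IsFeasible M k l dist d0 A) :
    penalty M k l dist d0 A = 0 := by
  obtain ⟨hne, hkl, hdist⟩ := hA
  simp only [penalty, if_neg hne.ne_empty]
  have hdist' : ∑ u ∈ A, ∑ v ∈ A, max 0 (dist u v - d0) = 0 :=
    sum_eq_zero fun u hu => sum_eq_zero fun v hv => max_eq_left (sub_nonpos.2 (hdist u hu v hv))
  simp [hkl, hdist']

end Penalty

section Graph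

variable {V : Type*} [Fintype V] [DecidableEq V] {w : V → V → ℝ}

theorem sum_degree_add_sum_sum_le_of_disjoint (hw_symm : ∀ i j, w i j = w j i)
    (hw_nonneg : ∀ i j, 0 ≤ w i j) {T S : Finset V} (hTS : Disjoint T S) :
    (∑ i ∈ T, ∑ j, w i j) + (∑ i ∈ T, ∑ j ∈ S, w i j) + ∑ i ∈ S, ∑ j ∈ S, w i j
      ≤ ∑ i, ∑ j, w i j := by
  have hrow_nonneg : ∀ i (U : Finset V), 0 ≤ ∑ j ∈ U, w i j :=
    fun i U => sum_nonneg fun j _ => hw_nonneg i j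
  have hcross : (∑ i ∈ T, ∑ j ∈ S, w i j) + ∑ i ∈ S, ∑ j ∈ S, w i j ≤ ∑ j ∈ S, ∑ i, w j i :=
    calc (∑ i ∈ T, ∑ j ∈ S, w i j) + ∑ i ∈ S, ∑ j ∈ S, w i j
        = ∑ i ∈ T ∪ S, ∑ j ∈ S, w i j := (sum_union hTS).symm
      _ ≤ ∑ i, ∑ j ∈ S, w i j :=
        sum_le_sum_of_subset_of_nonneg (subset_univ _) fun i _ _ => hrow_nonneg i S
      _ = ∑ j ∈ S, ∑ i, w j i := by rw [sum_comm]; simp only [hw_symm]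
  have hdeg : (∑ i ∈ T, ∑ j, w i j) + ∑ i ∈ S, ∑ j, w i j ≤ ∑ i, ∑ j, w i j := by
    rw [← sum_union hTS]
    exact sum_le_sum_of_subset_of_nonneg (subset_univ _) fun i _ _ => hrow_nonneg i univ
  linarith

theorem assoc_le_sum_degree (hw_symm : ∀ i j, w i j = w j i) (hw_nonneg : ∀ i j, 0 ≤ w i j)
    {S : Finset V} (A : Finset {x // x ∉ S}) :
    (∑ i ∈ A, ∑ j, w i.1 j) - (∑ i ∈ A, ∑ j ∈ Aᶜ, w i.1 j.1) + (∑ i ∈ A, ∑ j ∈ S, w i.1 j)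
        + (∑ i ∈ S, ∑ j ∈ S, w i j) * (if A = ∅ then 0 else 1)
      ≤ ∑ i, ∑ j, w i j := by
  have hdisj : Disjoint (A.map (Function.Embedding.subtype _)) S :=
    disjoint_left.2 fun x hx => by obtain ⟨a, -, rfl⟩ := mem_map.1 hx; exact a.2
  have hle := sum_degree_add_sum_sum_le_of_disjoint hw_symm hw_nonneg hdisj
  simp only [sum_map, Function.Embedding.coe_subtype] at hle
  have hcut : 0 ≤ ∑ i ∈ A, ∑ j ∈ Aᶜ, w i.1 j.1 :=
    sum_nonneg fun i _ => sum_nonneg fun j _ => hw_nonneg _ _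
  have hunit : (∑ i ∈ S, ∑ j ∈ S, w i j) * (if A = ∅ then 0 else 1) ≤ ∑ i ∈ S, ∑ j ∈ S, w i j := by
    have : 0 ≤ ∑ i ∈ S, ∑ j ∈ S, w i j := sum_nonneg fun i _ => sum_nonneg fun j _ => hw_nonneg i j
    split_ifs <;> linarith
  linarith

end Graph

theorem exact_penalty_general
    {V : Type*} [Fintype V] [DecidableEq V]
    (w : V → V → ℝ) (hw_symm : ∀ i j, w i j = w j i) (hw_nonneg : ∀ i j, 0 ≤ w i j)
    (g : V → ℝ) (hg : ∀ i, 0 < g i)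
    (S : Finset V) (p : ℕ) (M : Fin p → Vp S → ℝ) (k l : Fin p → ℝ)
    (dist : Vp S → Vp S → ℝ) (d0 : ℝ)
    -- the degree function d, the restricted degrees d^S, and the constants μ_S, ν_S
    (deg : V → ℝ) (hdeg : deg = fun i => ∑ j, w i j)
    (degS : Vp S → ℝ) (hdegS : degS = fun i => ∑ j ∈ S, w i.1 j)
    (muS nuS : ℝ) (hmuS : muS = ∑ i ∈ S, ∑ j ∈ S, w i j) (hnuS : nuS = ∑ i ∈ S, g i)
    -- assoc_S(A) = vol_d(A) − cut(A, V'∖A) + vol_{d^S}(A) + μ_S·unit(A)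
    (assocS : Finset (Vp S) → ℝ)
    (hassocS : assocS = fun A => (∑ i ∈ A, deg i.1) - (∑ i ∈ A, ∑ j ∈ Aᶜ, w i.1 j.1)
        + (∑ i ∈ A, degS i) + muS * (if A = ∅ then 0 else 1))
    -- the penalty function
    (pen : Finset (Vp S) → ℝ)
    (hpen : pen = fun A => if A = ∅ then 0 else
        (∑ j, max 0 ((∑ i ∈ A, M j i) - l j)) + (∑ j, max 0 (k j - ∑ i ∈ A, M j i))
        + ∑ u ∈ A, ∑ v ∈ A, max 0 (dist u v - d0))
    -- feasibility
    (Feasible : Finset (Vp S) → Prop)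
    (hFeas : Feasible = fun A => A.Nonempty
        ∧ (∀ j, k j ≤ (∑ i ∈ A, M j i) ∧ (∑ i ∈ A, M j i) ≤ l j)
        ∧ ∀ u ∈ A, ∀ v ∈ A, dist u v ≤ d0)
    -- assumptions of the theorem
    (hassoc_pos : ∀ A : Finset (Vp S), A.Nonempty → 0 < assocS A)
    (A0 : Finset (Vp S)) (hA0 : Feasible A0)
    (θ : ℝ) (hθ : 0 < θ)
    (hθpen : ∀ A : Finset (Vp S), A.Nonempty → ¬ Feasible A → θ ≤ pen A)
    (γ : ℝ)
    (hγ : ((∑ i, deg i) / θ) * (((∑ i ∈ A0, g i.1) + nuS) / assocS A0) < γ)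
    -- the penalized objective F_γ
    (Fγ : Finset (Vp S) → ℝ)
    (hFγ : Fγ = fun A => ((∑ i ∈ A, g i.1) + nuS + γ * pen A) / assocS A) :
    -- 1) every minimizer of F_γ over nonempty sets is feasible
    (∀ A : Finset (Vp S), A.Nonempty →
        (∀ B : Finset (Vp S), B.Nonempty → Fγ A ≤ Fγ B) → Feasible A)
    -- 2) min of F_γ over nonempty sets = min over feasible sets of the unpenalized ratio
    ∧ sInf {x : ℝ | ∃ A : Finset (Vp S), A.Nonempty ∧ x = Fγ A}
        = sInf {x : ℝ | ∃ A : Finset (Vp S), Feasible A ∧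
            x = ((∑ i ∈ A, g i.1) + nuS) / assocS A}
    -- 3) minimizers of F_γ are exactly the feasible sets maximizing the density
    ∧ ∀ A : Finset (Vp S), A.Nonempty →
        ((∀ B : Finset (Vp S), B.Nonempty → Fγ A ≤ Fγ B) ↔
          (Feasible A ∧ ∀ B : Finset (Vp S), Feasible B →
            assocS B / ((∑ i ∈ B, g i.1) + nuS) ≤ assocS A / ((∑ i ∈ A, g i.1) + nuS))) := by
  have hassoc_le : ∀ A, assocS A ≤ ∑ i, deg i := fun A => by
    subst hassocS hdeg hdegS hmuS
    exact assoc_le_sum_degree hw_symm hw_nonneg A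
  have hpen_zero : ∀ A, Feasible A → pen A = 0 := fun A hA => by
    subst hpen hFeas
    exact penalty_eq_zero_of_isFeasible hA
  have hnum_pos : ∀ A : Finset (Vp S), A.Nonempty → 0 < (∑ i ∈ A, g i.1) + nuS := fun A hA => by
    subst hnuS
    exact add_pos_of_pos_of_nonneg (sum_pos (fun i _ => hg i.1) hA)
      (sum_nonneg fun i _ => (hg i).le)
  set G : Finset (Vp S) → ℝ := fun A => ((∑ i ∈ A, g i.1) + nuS) / assocS A
  have hG_pos : ∀ A, A.Nonempty → 0 < G A := fun A hA => div_pos (hnum_pos A hA) (hassoc_pos A hA)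
  have hts : {A | Feasible A} ⊆ {A : Finset (Vp S) | A.Nonempty} :=
    fun A hA => by subst hFeas; exact hA.1
  have hFG : Set.EqOn Fγ G {A | Feasible A} := fun A hA => by
    simp only [hFγ, G, hpen_zero A hA, mul_zero, add_zero]
  have hlt : ∀ B ∈ {A : Finset (Vp S) | A.Nonempty} \ {A | Feasible A}, Fγ A0 < Fγ B := by
    rintro B ⟨hB, hBinf⟩
    rw [hFG hA0, hFγ]
    exact lt_add_mul_div_of_mul_lt (hG_pos A0 (hts hA0)).le (hnum_pos B hB).le (hassoc_pos B hB)
      (hassoc_le B) hθ (hθpen B hB hBinf) hγ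
  have hmin_iff := fun A (hA : A.Nonempty) => isMinOn_iff_of_eqOn_of_lt hts hFG hA0 hlt (a := A) hA
  have hsetOf_eq_image : ∀ (P : Finset (Vp S) → Prop) (F : Finset (Vp S) → ℝ),
      {x | ∃ A, P A ∧ x = F A} = F '' {A | P A} := fun P F => Set.ext fun x => by simp [eq_comm]
  refine ⟨fun A hA hmin => ((hmin_iff A hA).1 hmin).1, ?_, fun A hA => ?_⟩
  · rw [hsetOf_eq_image, hsetOf_eq_image]
    exact csInf_image_eq_of_eqOn_of_lt (Set.toFinite _) hts hFG hA0 hlt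
  · refine (hmin_iff A hA).trans (and_congr_right fun _ => forall₂_congr fun B hB => ?_)
    change G A ≤ G B ↔ _
    rw [← inv_div (∑ i ∈ B, g i.1 + nuS), ← inv_div (∑ i ∈ A, g i.1 + nuS),
      inv_le_inv₀ (hG_pos B (hts hB)) (hG_pos A hA)]

/-- **Exact penalty theorem.** Every minimizer of the penalized ratio
`F_γ(A) = (vol_g(A) + ν_S + γ·pen(A))/assoc_S(A)` over nonempty `A ⊆ V'` is feasible;
the minimum equals the minimum over feasible sets of `(vol_g(A) + ν_S)/assoc_S(A)`;
and the minimizers of `F_γ` are exactly the feasible sets maximizing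
`assoc_S(A)/(vol_g(A) + ν_S)`. -/
theorem exact_penalty
    {V : Type*} [Fintype V] [DecidableEq V] (hV : Nonempty V)
    (w : V → V → ℝ) (hw_symm : ∀ i j, w i j = w j i) (hw_nonneg : ∀ i j, 0 ≤ w i j)
    (g : V → ℝ) (hg : ∀ i, 0 < g i)
    (S : Finset V) (hVp : Nonempty (Vp S))
    (p : ℕ) (hp : 1 ≤ p)
    (M : Fin p → Vp S → ℝ) (hM : ∀ j i, 0 ≤ M j i) (k l : Fin p → ℝ)
    (dist : Vp S → Vp S → ℝ) (hdist_symm : ∀ u v, dist u v = dist v u)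
    (hdist_nonneg : ∀ u v, 0 ≤ dist u v) (d0 : ℝ) (hd0 : 0 ≤ d0)
    -- the degree function d, the restricted degrees d^S, and the constants μ_S, ν_S
    (deg : V → ℝ) (hdeg : deg = fun i => ∑ j, w i j)
    (degS : Vp S → ℝ) (hdegS : degS = fun i => ∑ j ∈ S, w i.1 j)
    (muS nuS : ℝ) (hmuS : muS = ∑ i ∈ S, ∑ j ∈ S, w i j) (hnuS : nuS = ∑ i ∈ S, g i)
    -- assoc_S(A) = vol_d(A) − cut(A, V'∖A) + vol_{d^S}(A) + μ_S·unit(A)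
    (assocS : Finset (Vp S) → ℝ)
    (hassocS : assocS = fun A => (∑ i ∈ A, deg i.1) - (∑ i ∈ A, ∑ j ∈ Aᶜ, w i.1 j.1)
        + (∑ i ∈ A, degS i) + muS * (if A = ∅ then 0 else 1))
    -- the penalty function
    (pen : Finset (Vp S) → ℝ)
    (hpen : pen = fun A => if A = ∅ then 0 else
        (∑ j, max 0 ((∑ i ∈ A, M j i) - l j)) + (∑ j, max 0 (k j - ∑ i ∈ A, M j i))
        + ∑ u ∈ A, ∑ v ∈ A, max 0 (dist u v - d0))
    -- feasibility
    (Feasible : Finset (Vp S) → Prop)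
    (hFeas : Feasible = fun A => A.Nonempty
        ∧ (∀ j, k j ≤ (∑ i ∈ A, M j i) ∧ (∑ i ∈ A, M j i) ≤ l j)
        ∧ ∀ u ∈ A, ∀ v ∈ A, dist u v ≤ d0)
    -- assumptions of the theorem
    (hassoc_pos : ∀ A : Finset (Vp S), A.Nonempty → 0 < assocS A)
    (A0 : Finset (Vp S)) (hA0 : Feasible A0)
    (θ : ℝ) (hθ : 0 < θ)
    (hθpen : ∀ A : Finset (Vp S), A.Nonempty → ¬ Feasible A → θ ≤ pen A)
    (γ : ℝ)
    (hγ : ((∑ i, deg i) / θ) * (((∑ i ∈ A0, g i.1) + nuS) / assocS A0) < γ)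
    -- the penalized objective F_γ
    (Fγ : Finset (Vp S) → ℝ)
    (hFγ : Fγ = fun A => ((∑ i ∈ A, g i.1) + nuS + γ * pen A) / assocS A) :
    -- 1) every minimizer of F_γ over nonempty sets is feasible
    (∀ A : Finset (Vp S), A.Nonempty →
        (∀ B : Finset (Vp S), B.Nonempty → Fγ A ≤ Fγ B) → Feasible A)
    -- 2) min of F_γ over nonempty sets = min over feasible sets of the unpenalized ratio
    ∧ sInf {x : ℝ | ∃ A : Finset (Vp S), A.Nonempty ∧ x = Fγ A}
        = sInf {x : ℝ | ∃ A : Finset (Vp S), Feasible A ∧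
            x = ((∑ i ∈ A, g i.1) + nuS) / assocS A}
    -- 3) minimizers of F_γ are exactly the feasible sets maximizing the density
    ∧ ∀ A : Finset (Vp S), A.Nonempty →
        ((∀ B : Finset (Vp S), B.Nonempty → Fγ A ≤ Fγ B) ↔
          (Feasible A ∧ ∀ B : Finset (Vp S), Feasible B →
            assocS B / ((∑ i ∈ B, g i.1) + nuS) ≤ assocS A / ((∑ i ∈ A, g i.1) + nuS))) :=
  exact_penalty_general w hw_symm hw_nonneg g hg S p M k l dist d0 deg hdeg degS hdegS muS nuS hmuS
    hnuS assocS hassocS pen hpen Feasible hFeas hassoc_pos A0 hA0 θ hθ hθpen γ hγ Fγ hFγ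
end

section
/- Key inequality for the exact penalty theorem: Assume assoc_S(A) > 0 for every nonempty A ⊆ V'. Let A_0 ⊆ V' be feasible and let θ > 0 satisfy pen(A) ≥ θ for every nonempty infeasible A ⊆ V'. If γ > (vol_d(V)/θ)·(vol_g(A_0) + ν_S)/assoc_S(A_0), where vol_d(V) = ∑_{i∈V} d(i), then for every nonempty infeasible A ⊆ V' one has (vol_g(A) + ν_S + γ·pen(A))/assoc_S(A) > (vol_g(A_0) + ν_S)/assoc_S(A_0). -/
/-!
Expanding every degree over `V' ∪ S` gives `assoc_S(A) = w(A,A) + 2 w(A,S) + μ_S·unit(A)`. This is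
nonnegative, and since `w` is symmetric, `vol_d(V) = w(V',V') + 2 w(V',S) + μ_S` dominates it.
So the ratio `c` attained by `A_0` is nonnegative, and for infeasible `A`
`c · assoc_S(A) ≤ c · vol_d(V) < γ θ ≤ γ · pen(A)`.
-/

open Finset

namespace ExactPenalty

variable {V : Type*} [Fintype V] [DecidableEq V] (w : V → V → ℝ) (S : Finset V)

def assoc (A : Finset (Vp S)) : ℝ :=
  (∑ i ∈ A, ∑ j, w i j) - (∑ i ∈ A, ∑ j ∈ Aᶜ, w i j) + (∑ i ∈ A, ∑ j ∈ S, w i j)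
    + (∑ i ∈ S, ∑ j ∈ S, w i j) * (if A = ∅ then 0 else 1)

theorem sum_eq_sum_vp_add_sum (f : V → ℝ) : ∑ i, f i = ∑ i : Vp S, f i + ∑ i ∈ S, f i := by
  rw [← sum_compl_add_sum S f, sum_subtype Sᶜ (fun _ => mem_compl) f]

theorem assoc_eq (A : Finset (Vp S)) :
    assoc w S A = (∑ i ∈ A, ∑ j ∈ A, w i j) + 2 * (∑ i ∈ A, ∑ j ∈ S, w i j)
      + (∑ i ∈ S, ∑ j ∈ S, w i j) * (if A = ∅ then 0 else 1) := by
  have hrow (i : V) : ∑ j, w i j = ∑ j ∈ A, w i j + ∑ j ∈ Aᶜ, w i j + ∑ j ∈ S, w i j := by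
    rw [sum_eq_sum_vp_add_sum S (w i), ← sum_add_sum_compl A (fun j : Vp S => w i j)]
  simp only [assoc, hrow, sum_add_distrib]
  ring

variable {w}

theorem assoc_nonneg (hw : ∀ i j, 0 ≤ w i j) (A : Finset (Vp S)) : 0 ≤ assoc w S A := by
  have hinner : 0 ≤ ∑ i ∈ A, ∑ j ∈ A, w i j := sum_nonneg fun i _ => sum_nonneg fun j _ => hw _ _
  have hbdry : 0 ≤ ∑ i ∈ A, ∑ j ∈ S, w i j := sum_nonneg fun i _ => sum_nonneg fun j _ => hw _ _
  have hμ : 0 ≤ ∑ i ∈ S, ∑ j ∈ S, w i j := sum_nonneg fun i _ => sum_nonneg fun j _ => hw _ _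
  have hunit : (0 : ℝ) ≤ if A = ∅ then 0 else 1 := by split_ifs <;> norm_num
  rw [assoc_eq]
  have := mul_nonneg hμ hunit
  linarith

theorem sum_sum_eq_of_symm (hsymm : ∀ i j, w i j = w j i) :
    ∑ i, ∑ j, w i j = (∑ i : Vp S, ∑ j : Vp S, w i j) + 2 * (∑ i : Vp S, ∑ j ∈ S, w i j)
      + ∑ i ∈ S, ∑ j ∈ S, w i j := by
  have hcross : ∑ i ∈ S, ∑ j : Vp S, w i j = ∑ i : Vp S, ∑ j ∈ S, w i j := by
    rw [sum_comm]
    exact sum_congr rfl fun j _ => sum_congr rfl fun i _ => hsymm i j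
  rw [sum_eq_sum_vp_add_sum S]
  simp only [sum_eq_sum_vp_add_sum S (w _), sum_add_distrib, hcross]
  ring

theorem assoc_le_sum_sum (hsymm : ∀ i j, w i j = w j i) (hw : ∀ i j, 0 ≤ w i j)
    (A : Finset (Vp S)) : assoc w S A ≤ ∑ i, ∑ j, w i j := by
  have hinner : ∑ i ∈ A, ∑ j ∈ A, w i j ≤ ∑ i : Vp S, ∑ j : Vp S, w i j :=
    calc ∑ i ∈ A, ∑ j ∈ A, w i j
        ≤ ∑ i ∈ A, ∑ j : Vp S, w i j :=
          sum_le_sum fun i _ => sum_le_sum_of_subset_of_nonneg (subset_univ A) fun j _ _ => hw _ _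
      _ ≤ ∑ i : Vp S, ∑ j : Vp S, w i j :=
          sum_le_sum_of_subset_of_nonneg (subset_univ A) fun i _ _ =>
            sum_nonneg fun j _ => hw _ _
  have hbdry : ∑ i ∈ A, ∑ j ∈ S, w i j ≤ ∑ i : Vp S, ∑ j ∈ S, w i j :=
    sum_le_sum_of_subset_of_nonneg (subset_univ A) fun i _ _ => sum_nonneg fun j _ => hw _ _
  have hunit : (∑ i ∈ S, ∑ j ∈ S, w i j) * (if A = ∅ then 0 else 1) ≤ ∑ i ∈ S, ∑ j ∈ S, w i j := by
    have hμ : 0 ≤ ∑ i ∈ S, ∑ j ∈ S, w i j := sum_nonneg fun i _ => sum_nonneg fun j _ => hw i j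
    split_ifs <;> simp [hμ]
  rw [assoc_eq, sum_sum_eq_of_symm S hsymm]
  linarith

end ExactPenalty

theorem lt_add_mul_div_of_le {c a D θ γ P x : ℝ} (hc : 0 ≤ c) (ha : 0 < a) (haD : a ≤ D)
    (hθ : 0 < θ) (hγ : D / θ * c < γ) (hP : θ ≤ P) (hx : 0 ≤ x) :
    c < (x + γ * P) / a := by
  have hγθ : D * c < γ * θ := by rwa [div_mul_eq_mul_div, div_lt_iff₀ hθ] at hγ
  have hγ_nonneg : 0 ≤ γ := (mul_nonneg (div_nonneg (ha.le.trans haD) hθ.le) hc).trans hγ.le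
  rw [lt_div_iff₀ ha]
  calc c * a ≤ D * c := by nlinarith
    _ < γ * θ := hγθ
    _ ≤ γ * P := mul_le_mul_of_nonneg_left hP hγ_nonneg
    _ ≤ x + γ * P := le_add_of_nonneg_left hx

theorem exact_penalty_key_inequality_general
    {V : Type*} [Fintype V] [DecidableEq V]
    (w : V → V → ℝ) (hw_symm : ∀ i j, w i j = w j i) (hw_nonneg : ∀ i j, 0 ≤ w i j)
    (g : V → ℝ) (hg : ∀ i, 0 < g i)
    (S : Finset V)
    -- the degree function d, the restricted degrees d^S, and the constants μ_S, ν_S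
    (deg : V → ℝ) (hdeg : deg = fun i => ∑ j, w i j)
    (degS : Vp S → ℝ) (hdegS : degS = fun i => ∑ j ∈ S, w i.1 j)
    (muS nuS : ℝ) (hmuS : muS = ∑ i ∈ S, ∑ j ∈ S, w i j) (hnuS : nuS = ∑ i ∈ S, g i)
    -- assoc_S(A) = vol_d(A) − cut(A, V'∖A) + vol_{d^S}(A) + μ_S·unit(A)
    (assocS : Finset (Vp S) → ℝ)
    (hassocS : assocS = fun A => (∑ i ∈ A, deg i.1) - (∑ i ∈ A, ∑ j ∈ Aᶜ, w i.1 j.1)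
        + (∑ i ∈ A, degS i) + muS * (if A = ∅ then 0 else 1))
    -- the penalty function
    (pen : Finset (Vp S) → ℝ)
    -- feasibility
    (Feasible : Finset (Vp S) → Prop)
    -- assumptions of the theorem
    (hassoc_pos : ∀ A : Finset (Vp S), A.Nonempty → 0 < assocS A)
    (A0 : Finset (Vp S))
    (θ : ℝ) (hθ : 0 < θ)
    (hθpen : ∀ A : Finset (Vp S), A.Nonempty → ¬ Feasible A → θ ≤ pen A)
    (γ : ℝ)
    (hγ : ((∑ i, deg i) / θ) * (((∑ i ∈ A0, g i.1) + nuS) / assocS A0) < γ) :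
    ∀ A : Finset (Vp S), A.Nonempty → ¬ Feasible A →
      ((∑ i ∈ A0, g i.1) + nuS) / assocS A0
        < ((∑ i ∈ A, g i.1) + nuS + γ * pen A) / assocS A := by
  intro A hA hA_infeasible
  have hassoc : assocS = ExactPenalty.assoc w S := by
    subst_vars
    rfl
  subst hassoc hnuS hdeg
  have hnum_nonneg (B : Finset (Vp S)) : 0 ≤ (∑ i ∈ B, g i.1) + ∑ i ∈ S, g i :=
    add_nonneg (sum_nonneg fun i _ => (hg i).le) (sum_nonneg fun i _ => (hg i).le)
  exact lt_add_mul_div_of_le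
    (div_nonneg (hnum_nonneg A0) (ExactPenalty.assoc_nonneg S hw_nonneg A0))
    (hassoc_pos A hA) (ExactPenalty.assoc_le_sum_sum S hw_symm hw_nonneg A) hθ hγ
    (hθpen A hA hA_infeasible) (hnum_nonneg A)

/-- **Key inequality for the exact penalty theorem.** If
`γ > (vol_d(V)/θ)·(vol_g(A_0) + ν_S)/assoc_S(A_0)`, then for every nonempty infeasible
`A ⊆ V'` one has
`(vol_g(A) + ν_S + γ·pen(A))/assoc_S(A) > (vol_g(A_0) + ν_S)/assoc_S(A_0)`. -/
theorem exact_penalty_key_inequality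
    {V : Type*} [Fintype V] [DecidableEq V] (hV : Nonempty V)
    (w : V → V → ℝ) (hw_symm : ∀ i j, w i j = w j i) (hw_nonneg : ∀ i j, 0 ≤ w i j)
    (g : V → ℝ) (hg : ∀ i, 0 < g i)
    (S : Finset V) (hVp : Nonempty (Vp S))
    (p : ℕ) (hp : 1 ≤ p)
    (M : Fin p → Vp S → ℝ) (hM : ∀ j i, 0 ≤ M j i) (k l : Fin p → ℝ)
    (dist : Vp S → Vp S → ℝ) (hdist_symm : ∀ u v, dist u v = dist v u)
    (hdist_nonneg : ∀ u v, 0 ≤ dist u v) (d0 : ℝ) (hd0 : 0 ≤ d0)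
    -- the degree function d, the restricted degrees d^S, and the constants μ_S, ν_S
    (deg : V → ℝ) (hdeg : deg = fun i => ∑ j, w i j)
    (degS : Vp S → ℝ) (hdegS : degS = fun i => ∑ j ∈ S, w i.1 j)
    (muS nuS : ℝ) (hmuS : muS = ∑ i ∈ S, ∑ j ∈ S, w i j) (hnuS : nuS = ∑ i ∈ S, g i)
    -- assoc_S(A) = vol_d(A) − cut(A, V'∖A) + vol_{d^S}(A) + μ_S·unit(A)
    (assocS : Finset (Vp S) → ℝ)
    (hassocS : assocS = fun A => (∑ i ∈ A, deg i.1) - (∑ i ∈ A, ∑ j ∈ Aᶜ, w i.1 j.1)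
        + (∑ i ∈ A, degS i) + muS * (if A = ∅ then 0 else 1))
    -- the penalty function
    (pen : Finset (Vp S) → ℝ)
    (hpen : pen = fun A => if A = ∅ then 0 else
        (∑ j, max 0 ((∑ i ∈ A, M j i) - l j)) + (∑ j, max 0 (k j - ∑ i ∈ A, M j i))
        + ∑ u ∈ A, ∑ v ∈ A, max 0 (dist u v - d0))
    -- feasibility
    (Feasible : Finset (Vp S) → Prop)
    (hFeas : Feasible = fun A => A.Nonempty
        ∧ (∀ j, k j ≤ (∑ i ∈ A, M j i) ∧ (∑ i ∈ A, M j i) ≤ l j)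
        ∧ ∀ u ∈ A, ∀ v ∈ A, dist u v ≤ d0)
    -- assumptions of the theorem
    (hassoc_pos : ∀ A : Finset (Vp S), A.Nonempty → 0 < assocS A)
    (A0 : Finset (Vp S)) (hA0 : Feasible A0)
    (θ : ℝ) (hθ : 0 < θ)
    (hθpen : ∀ A : Finset (Vp S), A.Nonempty → ¬ Feasible A → θ ≤ pen A)
    (γ : ℝ)
    (hγ : ((∑ i, deg i) / θ) * (((∑ i ∈ A0, g i.1) + nuS) / assocS A0) < γ) :
    ∀ A : Finset (Vp S), A.Nonempty → ¬ Feasible A →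
      ((∑ i ∈ A0, g i.1) + nuS) / assocS A0
        < ((∑ i ∈ A, g i.1) + nuS + γ * pen A) / assocS A :=
  exact_penalty_key_inequality_general w hw_symm hw_nonneg g hg S deg hdeg degS hdegS muS nuS hmuS
    hnuS assocS hassocS pen Feasible hassoc_pos A0 θ hθ hθpen γ hγ
end

section
/- Exact continuous relaxation: Assume assoc_S(A) > 0 for every nonempty A ⊆ V'. Fix γ ≥ 0 and define R(A) = vol_g(A) + ν_S·unit(A) + γ·pen(A). Then assoc_S^L(f) > 0 for every f : V' → ℝ with f ≥ 0 and f ≠ 0, and inf over all such f of R^L(f)/assoc_S^L(f) equals min over nonempty A ⊆ V' of R(A)/assoc_S(A). Moreover, if f* ≥ 0, f* ≠ 0 attains this infimum, then any threshold set A_i(f*) = {j ∈ V' : f*(j) ≥ f*(i)} (i ∈ V') minimizing R(A_i(f*))/assoc_S(A_i(f*)) attains the minimum of R(A)/assoc_S(A) over nonempty A ⊆ V'. -/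
open Finset

/-- The Lovász extension of a set function `T` (with `T ∅ = 0`): choosing an enumeration
`σ(1), …, σ(m)` of the ground set with `f ∘ σ` nondecreasing (here produced by `Tuple.sort`),
`T^L(f) = ∑_{i=1}^{m−1} T({σ(i+1),…,σ(m)})·(f(σ(i+1)) − f(σ(i))) + T(V')·f(σ(1))`. -/
noncomputable def lovasz {α : Type*} [Fintype α] [DecidableEq α]
    (T : Finset α → ℝ) (f : α → ℝ) : ℝ :=
  let m := Fintype.card α
  let e : Fin m ≃ α := (Fintype.equivFin α).symm
  let σ : Fin m → α := fun i => e (Tuple.sort (f ∘ e) i)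
  (∑ i : Fin m, if h : (i : ℕ) + 1 < m then
      T ((Finset.Ici (⟨(i : ℕ) + 1, h⟩ : Fin m)).image σ) * (f (σ ⟨(i : ℕ) + 1, h⟩) - f (σ i))
    else 0)
  + T Finset.univ * (if h : 0 < m then f (σ ⟨0, h⟩) else 0)

/-- The threshold set `A_i(f) = {j ∈ V' : f(j) ≥ f(i)}`. -/
noncomputable def thresholdSet {α : Type*} [Fintype α] [DecidableEq α]
    (f : α → ℝ) (i : α) : Finset α :=
  Finset.univ.filter (fun j => f i ≤ f j)

/-! For `f ≥ 0` the Lovász extension `T^L(f)` is a nonnegative combination of the values of `T`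
on the threshold sets of `f`: the coefficients are the jumps of `f` sorted increasingly, and
`min f` for the whole ground set. Hence `r • T' ≤ T` on the threshold sets of `f` gives
`r • T'^L(f) ≤ T^L(f)`, so each continuous ratio `R^L(f) / assoc^L(f)` dominates the best
discrete ratio among the threshold sets of `f`, while the indicator of `A` realises
`R(A) / assoc(A)` because `T^L(1_A) = T(A)`. Comparing `assoc` with the constant set function
`ε = min_x assoc(A_x(f))`, whose extension is `ε · max f`, gives positivity of `assoc^L`. -/

theorem Set.finite_setOf_exists_and_eq {α β : Type*} [Finite α] (p : α → Prop) (F : α → β) :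
    {x | ∃ a, p a ∧ x = F a}.Finite :=
  (Set.finite_range F).subset (by rintro _ ⟨a, -, rfl⟩; exact ⟨a, rfl⟩)

theorem csInf_eq_of_finite_of_subset_of_forall_exists_le {β : Type*}
    [ConditionallyCompleteLinearOrder β] {C D : Set β} (hD : D.Finite) (hDC : D ⊆ C)
    (h : ∀ x ∈ C, ∃ y ∈ D, y ≤ x) : sInf C = sInf D := by
  rcases D.eq_empty_or_nonempty with rfl | hDne
  · have hC : C = ∅ := Set.eq_empty_of_forall_notMem fun x hx => by
      obtain ⟨y, hy, -⟩ := h x hx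
      exact hy
    rw [hC]
  · refine IsLeast.csInf_eq ⟨hDC (hDne.csInf_mem hD), fun x hx => ?_⟩
    obtain ⟨y, hy, hyx⟩ := h x hx
    exact (csInf_le hD.bddBelow hy).trans hyx

theorem Fin.sum_succ_sub_castSucc {M : Type*} [AddCommGroup M] (n : ℕ) (g : Fin (n + 1) → M) :
    ∑ i : Fin n, (g i.succ - g i.castSucc) = g (Fin.last n) - g 0 := by
  induction n with
  | zero => simp
  | succ n ih =>
    rw [Fin.sum_univ_castSucc]
    have := ih (fun i => g i.castSucc)
    simp only [Fin.succ_castSucc] at this ⊢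
    rw [this]
    simp

theorem Fin.sum_dite_succ_sub {M : Type*} [AddCommGroup M] {m : ℕ} (hm : 0 < m)
    (g : Fin m → M) :
    (∑ i : Fin m, if h : (i : ℕ) + 1 < m then g ⟨(i : ℕ) + 1, h⟩ - g i else 0)
      = g ⟨m - 1, by omega⟩ - g ⟨0, hm⟩ := by
  obtain ⟨n, rfl⟩ := Nat.exists_eq_succ_of_ne_zero hm.ne'
  rw [Fin.sum_univ_castSucc]
  simpa [Fin.succ, Fin.last] using Fin.sum_succ_sub_castSucc n g

section Lovasz

variable {α : Type*} [Fintype α]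

noncomputable def sortingEquiv (f : α → ℝ) : Fin (Fintype.card α) ≃ α :=
  (Tuple.sort (f ∘ (Fintype.equivFin α).symm)).trans (Fintype.equivFin α).symm

theorem monotone_comp_sortingEquiv (f : α → ℝ) : Monotone fun i => f (sortingEquiv f i) :=
  fun _ _ h => Tuple.monotone_sort (f ∘ (Fintype.equivFin α).symm) h

theorem sortingEquiv_last (f : α → ℝ) [Nonempty α] :
    f (sortingEquiv f ⟨Fintype.card α - 1, by have := Fintype.card_pos (α := α); omega⟩)
      = univ.sup' univ_nonempty f := by
  refine le_antisymm (le_sup' f (mem_univ _)) (sup'_le _ _ fun x _ => ?_)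
  obtain ⟨t, rfl⟩ := (sortingEquiv f).surjective x
  exact monotone_comp_sortingEquiv f (Fin.le_def.2 (by simp; omega))

variable [DecidableEq α]

theorem lovasz_def (T : Finset α → ℝ) (f : α → ℝ) :
    lovasz T f =
      (∑ i : Fin (Fintype.card α), if h : (i : ℕ) + 1 < Fintype.card α then
        T ((Ici (⟨(i : ℕ) + 1, h⟩ : Fin (Fintype.card α))).image (sortingEquiv f))
          * (f (sortingEquiv f ⟨(i : ℕ) + 1, h⟩) - f (sortingEquiv f i))
        else 0)
      + T univ * (if h : 0 < Fintype.card α then f (sortingEquiv f ⟨0, h⟩) else 0) :=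
  rfl

theorem mem_thresholdSet_self (f : α → ℝ) (x : α) : x ∈ thresholdSet f x := by
  simp [thresholdSet]

theorem image_Ici_sortingEquiv {f : α → ℝ} {i : Fin (Fintype.card α)}
    (h : (i : ℕ) + 1 < Fintype.card α)
    (hlt : f (sortingEquiv f i) < f (sortingEquiv f ⟨(i : ℕ) + 1, h⟩)) :
    (Ici (⟨(i : ℕ) + 1, h⟩ : Fin (Fintype.card α))).image (sortingEquiv f)
      = thresholdSet f (sortingEquiv f ⟨(i : ℕ) + 1, h⟩) := by
  ext x
  obtain ⟨t, rfl⟩ := (sortingEquiv f).surjective x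
  simp only [thresholdSet, mem_image, mem_Ici, mem_filter, mem_univ, true_and,
    EmbeddingLike.apply_eq_iff_eq, exists_eq_right]
  refine ⟨fun hle => monotone_comp_sortingEquiv f hle, fun hle => ?_⟩
  by_contra! hti
  have hti : t ≤ i := Fin.le_def.2 (Nat.lt_succ_iff.1 hti)
  exact (hle.trans (monotone_comp_sortingEquiv f hti)).not_gt hlt

theorem thresholdSet_sortingEquiv_zero (f : α → ℝ) (h : 0 < Fintype.card α) :
    thresholdSet f (sortingEquiv f ⟨0, h⟩) = univ := by
  ext x
  obtain ⟨t, rfl⟩ := (sortingEquiv f).surjective x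
  simpa [thresholdSet] using monotone_comp_sortingEquiv f (Fin.le_def.2 (Nat.zero_le t))

theorem lovasz_mono {T T' : Finset α → ℝ} {f : α → ℝ} (hf : ∀ x, 0 ≤ f x)
    (h : ∀ x, 0 < f x → T' (thresholdSet f x) ≤ T (thresholdSet f x)) :
    lovasz T' f ≤ lovasz T f := by
  rw [lovasz_def, lovasz_def]
  refine add_le_add (sum_le_sum fun i _ => ?_) ?_
  · split_ifs with hi
    · have hle : f (sortingEquiv f i) ≤ f (sortingEquiv f ⟨(i : ℕ) + 1, hi⟩) :=
        monotone_comp_sortingEquiv f (Fin.le_def.2 (Nat.le_succ i))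
      rcases hle.eq_or_lt with heq | hlt
      · rw [heq, sub_self, mul_zero, mul_zero]
      · rw [image_Ici_sortingEquiv hi hlt]
        exact mul_le_mul_of_nonneg_right (h _ ((hf _).trans_lt hlt)) (sub_nonneg.2 hlt.le)
    · rfl
  · split_ifs with hm
    · rcases (hf (sortingEquiv f ⟨0, hm⟩)).eq_or_lt with hzero | hpos
      · simp [← hzero]
      · rw [← thresholdSet_sortingEquiv_zero f hm]
        exact mul_le_mul_of_nonneg_right (h _ hpos) hpos.le
    · simp

theorem lovasz_const_mul (r : ℝ) (T : Finset α → ℝ) (f : α → ℝ) :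
    lovasz (fun A => r * T A) f = r * lovasz T f := by
  simp only [lovasz_def, mul_add, mul_sum]
  congr 1
  · refine sum_congr rfl fun i _ => ?_
    split_ifs <;> ring
  · ring

theorem lovasz_const [Nonempty α] (c : ℝ) (f : α → ℝ) :
    lovasz (fun _ => c) f = c * univ.sup' univ_nonempty f := by
  have hm : 0 < Fintype.card α := Fintype.card_pos
  have hone : lovasz (fun _ => 1) f = univ.sup' univ_nonempty f := by
    rw [lovasz_def]
    simp only [one_mul]
    rw [Fin.sum_dite_succ_sub hm fun i => f (sortingEquiv f i), dif_pos hm, sortingEquiv_last f]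
    ring
  rw [← hone, ← lovasz_const_mul]
  simp only [mul_one]

theorem lovasz_pos {T : Finset α → ℝ} (hT : ∀ A : Finset α, A.Nonempty → 0 < T A)
    {f : α → ℝ} (hf : ∀ x, 0 ≤ f x) (hf0 : f ≠ 0) : 0 < lovasz T f := by
  obtain ⟨x, hx⟩ : ∃ x, 0 < f x := by
    by_contra! h
    exact hf0 (funext fun x => le_antisymm (h x) (hf x))
  have : Nonempty α := ⟨x⟩
  obtain ⟨y, -, hy⟩ := exists_min_image univ (fun y => T (thresholdSet f y)) univ_nonempty
  calc 0 < T (thresholdSet f y) * f x := mul_pos (hT _ ⟨y, mem_thresholdSet_self f y⟩) hx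
    _ ≤ T (thresholdSet f y) * univ.sup' univ_nonempty f := by
      gcongr
      · exact (hT _ ⟨y, mem_thresholdSet_self f y⟩).le
      · exact le_sup' f (mem_univ x)
    _ = lovasz (fun _ => T (thresholdSet f y)) f := (lovasz_const _ f).symm
    _ ≤ lovasz T f := lovasz_mono hf fun z _ => hy z (mem_univ z)

theorem thresholdSet_indicator {A : Finset α} {x : α} (hx : x ∈ A) :
    thresholdSet (fun y => if y ∈ A then (1 : ℝ) else 0) x = A := by
  ext y
  by_cases hy : y ∈ A <;> simp [thresholdSet, hx, hy]

theorem lovasz_indicator (T : Finset α → ℝ) {A : Finset α} (hA : A.Nonempty) :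
    lovasz T (fun x => if x ∈ A then (1 : ℝ) else 0) = T A := by
  obtain ⟨a, ha⟩ := hA
  have : Nonempty α := ⟨a⟩
  set f : α → ℝ := fun x => if x ∈ A then 1 else 0
  have hf : ∀ x, 0 ≤ f x := fun x => by positivity
  have hmax : univ.sup' univ_nonempty f = 1 :=
    le_antisymm (sup'_le _ _ fun x _ => by by_cases hx : x ∈ A <;> simp [f, hx])
      (le_sup'_of_le f (mem_univ a) (by simp [f, ha]))
  have hthreshold : ∀ x, 0 < f x → thresholdSet f x = A := fun x hx =>
    thresholdSet_indicator (by by_contra h; simp [f, h] at hx)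
  calc lovasz T f = lovasz (fun _ => T A) f :=
        le_antisymm (lovasz_mono hf fun x hx => by rw [hthreshold x hx])
          (lovasz_mono hf fun x hx => by rw [hthreshold x hx])
    _ = T A := by rw [lovasz_const, hmax, mul_one]

theorem le_lovasz_div_lovasz {T T' : Finset α → ℝ} (hT' : ∀ A : Finset α, A.Nonempty → 0 < T' A)
    {f : α → ℝ} (hf : ∀ x, 0 ≤ f x) (hf0 : f ≠ 0) {r : ℝ}
    (h : ∀ x, r ≤ T (thresholdSet f x) / T' (thresholdSet f x)) :
    r ≤ lovasz T f / lovasz T' f := by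
  rw [le_div_iff₀ (lovasz_pos hT' hf hf0), ← lovasz_const_mul]
  exact lovasz_mono hf fun x _ =>
    (le_div_iff₀ (hT' _ ⟨x, mem_thresholdSet_self f x⟩)).1 (h x)

theorem exists_thresholdSet_div_le {T T' : Finset α → ℝ}
    (hT' : ∀ A : Finset α, A.Nonempty → 0 < T' A) {f : α → ℝ} (hf : ∀ x, 0 ≤ f x)
    (hf0 : f ≠ 0) :
    ∃ x, T (thresholdSet f x) / T' (thresholdSet f x) ≤ lovasz T f / lovasz T' f := by
  obtain ⟨x, -⟩ := Function.ne_iff.1 hf0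
  obtain ⟨y, -, hy⟩ := exists_min_image univ
    (fun y => T (thresholdSet f y) / T' (thresholdSet f y)) ⟨x, mem_univ x⟩
  exact ⟨y, le_lovasz_div_lovasz hT' hf hf0 fun z => hy z (mem_univ z)⟩

theorem sInf_lovasz_div_eq_sInf_div {T T' : Finset α → ℝ}
    (hT' : ∀ A : Finset α, A.Nonempty → 0 < T' A) :
    sInf {x : ℝ | ∃ f : α → ℝ, (∀ i, 0 ≤ f i) ∧ f ≠ 0 ∧ x = lovasz T f / lovasz T' f}
      = sInf {x : ℝ | ∃ A : Finset α, A.Nonempty ∧ x = T A / T' A} := by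
  refine csInf_eq_of_finite_of_subset_of_forall_exists_le
    (Set.finite_setOf_exists_and_eq _ _) ?_ ?_
  · rintro _ ⟨A, hA, rfl⟩
    refine ⟨fun x => if x ∈ A then 1 else 0, fun x => by positivity, fun h => ?_,
      by rw [lovasz_indicator T hA, lovasz_indicator T' hA]⟩
    obtain ⟨a, ha⟩ := hA
    simpa [ha] using congrFun h a
  · rintro _ ⟨f, hf, hf0, rfl⟩
    obtain ⟨x, hx⟩ := exists_thresholdSet_div_le hT' hf hf0
    exact ⟨_, ⟨thresholdSet f x, ⟨x, mem_thresholdSet_self f x⟩, rfl⟩, hx⟩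

end Lovasz

theorem exact_continuous_relaxation_general
    {V : Type*} [Fintype V] [DecidableEq V]
    (S : Finset V)
    (assocS : Finset (Vp S) → ℝ)
    -- assumptions of the theorem
    (hassoc_pos : ∀ A : Finset (Vp S), A.Nonempty → 0 < assocS A)
    (R : Finset (Vp S) → ℝ) :
    -- 1) positivity of the Lovász extension of assoc_S on nonzero nonnegative vectors
    (∀ f : Vp S → ℝ, (∀ i, 0 ≤ f i) → f ≠ 0 → 0 < lovasz assocS f)
    -- 2) the infimum of the continuous ratio equals the discrete minimum
    ∧ sInf {x : ℝ | ∃ f : Vp S → ℝ, (∀ i, 0 ≤ f i) ∧ f ≠ 0 ∧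
          x = lovasz R f / lovasz assocS f}
        = sInf {x : ℝ | ∃ A : Finset (Vp S), A.Nonempty ∧ x = R A / assocS A}
    -- 3) optimal thresholding of a continuous minimizer yields a discrete minimizer
    ∧ ∀ f : Vp S → ℝ, (∀ i, 0 ≤ f i) → f ≠ 0 →
        lovasz R f / lovasz assocS f
          = sInf {x : ℝ | ∃ f' : Vp S → ℝ, (∀ i, 0 ≤ f' i) ∧ f' ≠ 0 ∧
              x = lovasz R f' / lovasz assocS f'} →
        ∀ i : Vp S,
          (∀ i' : Vp S, R (thresholdSet f i) / assocS (thresholdSet f i)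
              ≤ R (thresholdSet f i') / assocS (thresholdSet f i')) →
          ∀ B : Finset (Vp S), B.Nonempty →
            R (thresholdSet f i) / assocS (thresholdSet f i) ≤ R B / assocS B := by
  have hinf := sInf_lovasz_div_eq_sInf_div (T := R) hassoc_pos
  refine ⟨fun f hf hf0 => lovasz_pos hassoc_pos hf hf0, hinf, ?_⟩
  intro f hf hf0 hopt i hi B hB
  calc R (thresholdSet f i) / assocS (thresholdSet f i)
      ≤ lovasz R f / lovasz assocS f := le_lovasz_div_lovasz hassoc_pos hf hf0 hi
    _ = sInf {x : ℝ | ∃ A : Finset (Vp S), A.Nonempty ∧ x = R A / assocS A} := hopt.trans hinf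
    _ ≤ R B / assocS B :=
      csInf_le (Set.finite_setOf_exists_and_eq _ _).bddBelow ⟨B, hB, rfl⟩

/-- **Exact continuous relaxation.** With `R(A) = vol_g(A) + ν_S·unit(A) + γ·pen(A)`:
`assoc_S^L(f) > 0` for all `f ≥ 0`, `f ≠ 0`; the infimum of `R^L(f)/assoc_S^L(f)` over such `f`
equals the minimum of `R(A)/assoc_S(A)` over nonempty `A ⊆ V'`; and optimal thresholding of a
minimizer `f*` yields a set attaining the discrete minimum. -/
theorem exact_continuous_relaxation
    {V : Type*} [Fintype V] [DecidableEq V] (hV : Nonempty V)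
    (w : V → V → ℝ) (hw_symm : ∀ i j, w i j = w j i) (hw_nonneg : ∀ i j, 0 ≤ w i j)
    (g : V → ℝ) (hg : ∀ i, 0 < g i)
    (S : Finset V) (hVp : Nonempty (Vp S))
    (p : ℕ) (hp : 1 ≤ p)
    (M : Fin p → Vp S → ℝ) (hM : ∀ j i, 0 ≤ M j i) (k l : Fin p → ℝ)
    (dist : Vp S → Vp S → ℝ) (hdist_symm : ∀ u v, dist u v = dist v u)
    (hdist_nonneg : ∀ u v, 0 ≤ dist u v) (d0 : ℝ) (hd0 : 0 ≤ d0)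
    -- the degree function d, the restricted degrees d^S, and the constants μ_S, ν_S
    (deg : V → ℝ) (hdeg : deg = fun i => ∑ j, w i j)
    (degS : Vp S → ℝ) (hdegS : degS = fun i => ∑ j ∈ S, w i.1 j)
    (muS nuS : ℝ) (hmuS : muS = ∑ i ∈ S, ∑ j ∈ S, w i j) (hnuS : nuS = ∑ i ∈ S, g i)
    -- assoc_S(A) = vol_d(A) − cut(A, V'∖A) + vol_{d^S}(A) + μ_S·unit(A)
    (assocS : Finset (Vp S) → ℝ)
    (hassocS : assocS = fun A => (∑ i ∈ A, deg i.1) - (∑ i ∈ A, ∑ j ∈ Aᶜ, w i.1 j.1)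
        + (∑ i ∈ A, degS i) + muS * (if A = ∅ then 0 else 1))
    -- the penalty function
    (pen : Finset (Vp S) → ℝ)
    (hpen : pen = fun A => if A = ∅ then 0 else
        (∑ j, max 0 ((∑ i ∈ A, M j i) - l j)) + (∑ j, max 0 (k j - ∑ i ∈ A, M j i))
        + ∑ u ∈ A, ∑ v ∈ A, max 0 (dist u v - d0))
    -- assumptions of the theorem
    (hassoc_pos : ∀ A : Finset (Vp S), A.Nonempty → 0 < assocS A)
    (γ : ℝ) (hγ : 0 ≤ γ)
    -- R(A) = vol_g(A) + ν_S·unit(A) + γ·pen(A)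
    (R : Finset (Vp S) → ℝ)
    (hR : R = fun A => (∑ i ∈ A, g i.1) + nuS * (if A = ∅ then 0 else 1) + γ * pen A) :
    -- 1) positivity of the Lovász extension of assoc_S on nonzero nonnegative vectors
    (∀ f : Vp S → ℝ, (∀ i, 0 ≤ f i) → f ≠ 0 → 0 < lovasz assocS f)
    -- 2) the infimum of the continuous ratio equals the discrete minimum
    ∧ sInf {x : ℝ | ∃ f : Vp S → ℝ, (∀ i, 0 ≤ f i) ∧ f ≠ 0 ∧
          x = lovasz R f / lovasz assocS f}
        = sInf {x : ℝ | ∃ A : Finset (Vp S), A.Nonempty ∧ x = R A / assocS A}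
    -- 3) optimal thresholding of a continuous minimizer yields a discrete minimizer
    ∧ ∀ f : Vp S → ℝ, (∀ i, 0 ≤ f i) → f ≠ 0 →
        lovasz R f / lovasz assocS f
          = sInf {x : ℝ | ∃ f' : Vp S → ℝ, (∀ i, 0 ≤ f' i) ∧ f' ≠ 0 ∧
              x = lovasz R f' / lovasz assocS f'} →
        ∀ i : Vp S,
          (∀ i' : Vp S, R (thresholdSet f i) / assocS (thresholdSet f i)
              ≤ R (thresholdSet f i') / assocS (thresholdSet f i')) →
          ∀ B : Finset (Vp S), B.Nonempty →
            R (thresholdSet f i) / assocS (thresholdSet f i) ≤ R B / assocS B :=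
  exact_continuous_relaxation_general S assocS hassoc_pos R
end

section
/- Optimal thresholding inequality: Assume assoc_S(A) > 0 for every nonempty A ⊆ V'. Fix γ ≥ 0 and define R(A) = vol_g(A) + ν_S·unit(A) + γ·pen(A). Then for every f : V' → ℝ with f ≥ 0 and f ≠ 0, there exists i ∈ V' such that the threshold set A_i(f) = {j ∈ V' : f(j) ≥ f(i)} satisfies R(A_i(f))·assoc_S^L(f) ≤ R^L(f)·assoc_S(A_i(f)); equivalently, min_{i∈V'} R(A_i(f))/assoc_S(A_i(f)) ≤ R^L(f)/assoc_S^L(f). -/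
open Finset

lemma key_core {α : Type*} [Fintype α] [DecidableEq α] [Nonempty α]
    (T R : Finset α → ℝ) (hT : ∀ A : Finset α, A.Nonempty → 0 < T A)
    (f : α → ℝ) (hf : ∀ i, 0 ≤ f i) (hf0 : f ≠ 0) :
    ∃ i : α, 0 < lovasz T f ∧
      R (thresholdSet f i) * lovasz T f ≤ lovasz R f * T (thresholdSet f i) := by
  classical
  set m := Fintype.card α with hmdef
  have hm : 0 < m := Fintype.card_pos
  set e : Fin m ≃ α := (Fintype.equivFin α).symm with hedef
  set σ : Fin m → α := fun i => e (Tuple.sort (f ∘ e) i) with hσdef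
  have hσbij : Function.Bijective σ := by
    have : σ = e ∘ (Tuple.sort (f ∘ e)) := rfl
    rw [this]
    exact e.bijective.comp (Tuple.sort (f ∘ e)).bijective
  have hmono : Monotone (f ∘ σ) := by
    have : f ∘ σ = (f ∘ e) ∘ (Tuple.sort (f ∘ e)) := rfl
    rw [this]
    exact Tuple.monotone_sort _
  have hmono' : ∀ i j : Fin m, i ≤ j → f (σ i) ≤ f (σ j) := fun i j h => hmono h
  -- unfolded lovasz
  have hlov : ∀ X : Finset α → ℝ, lovasz X f =
      (∑ i : Fin m, if h : (i : ℕ) + 1 < m then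
        X ((Finset.Ici (⟨(i : ℕ) + 1, h⟩ : Fin m)).image σ) * (f (σ ⟨(i : ℕ) + 1, h⟩) - f (σ i))
      else 0) + X Finset.univ * f (σ ⟨0, hm⟩) := by
    intro X
    rw [lovasz]
    simp only [← hmdef, ← hedef, ← hσdef, dif_pos hm]
    rfl
  -- threshold sets nonempty
  have hthr : ∀ i : α, i ∈ thresholdSet f i := by
    intro i; simp [thresholdSet]
  have hTpos : ∀ i : α, 0 < T (thresholdSet f i) := fun i => hT _ ⟨i, hthr i⟩
  -- suffix sets are threshold sets (when the step is strict)
  have hsuffix : ∀ (i : Fin m) (h : (i : ℕ) + 1 < m), f (σ i) < f (σ ⟨(i : ℕ) + 1, h⟩) →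
      (Finset.Ici (⟨(i : ℕ) + 1, h⟩ : Fin m)).image σ = thresholdSet f (σ ⟨(i : ℕ) + 1, h⟩) := by
    intro i h hlt
    ext j
    simp only [Finset.mem_image, Finset.mem_Ici, thresholdSet, Finset.mem_filter,
      Finset.mem_univ, true_and]
    constructor
    · rintro ⟨t, ht, rfl⟩
      exact hmono' _ _ ht
    · intro hj
      obtain ⟨t, rfl⟩ := hσbij.2 j
      refine ⟨t, ?_, rfl⟩
      by_contra hc
      push_neg at hc
      have : (t : ℕ) ≤ (i : ℕ) := Nat.lt_succ_iff.mp hc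
      have := hmono' t i this
      linarith
  have huniv : (Finset.univ : Finset α) = thresholdSet f (σ ⟨0, hm⟩) := by
    ext j
    simp only [thresholdSet, Finset.mem_filter, Finset.mem_univ, true_and, true_iff]
    obtain ⟨t, rfl⟩ := hσbij.2 j
    exact hmono' ⟨0, hm⟩ t (by simp [Fin.le_def])
  -- suffix sets nonempty
  have hsufne : ∀ (i : Fin m) (h : (i : ℕ) + 1 < m),
      ((Finset.Ici (⟨(i : ℕ) + 1, h⟩ : Fin m)).image σ).Nonempty :=
    fun i h => ⟨σ ⟨(i:ℕ)+1, h⟩, Finset.mem_image_of_mem _ (Finset.mem_Ici.mpr le_rfl)⟩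
  -- positivity of lovasz T f
  have hterm_nonneg : ∀ i : Fin m, 0 ≤ (if h : (i : ℕ) + 1 < m then
        T ((Finset.Ici (⟨(i : ℕ) + 1, h⟩ : Fin m)).image σ) * (f (σ ⟨(i : ℕ) + 1, h⟩) - f (σ i))
      else 0) := by
    intro i
    by_cases h : (i : ℕ) + 1 < m
    · rw [dif_pos h]
      have h1 := (hT _ (hsufne i h)).le
      have h2 : f (σ i) ≤ f (σ ⟨(i:ℕ)+1, h⟩) := hmono' i _ (by simp [Fin.le_def])
      nlinarith
    · rw [dif_neg h]
  have hLT : 0 < lovasz T f := by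
    rw [hlov]
    rcases (hf (σ ⟨0, hm⟩)).lt_or_eq with h0 | h0
    · exact add_pos_of_nonneg_of_pos (Finset.sum_nonneg fun i _ => hterm_nonneg i)
        (mul_pos (hT _ ⟨σ ⟨0, hm⟩, Finset.mem_univ _⟩) h0)
    · -- f (σ 0) = 0; find minimal positive index
      have hne : (Finset.univ.filter (fun k : Fin m => 0 < f (σ k))).Nonempty := by
        have : ∃ j, f j ≠ 0 := by
          by_contra hc; push_neg at hc; exact hf0 (funext hc)
        obtain ⟨j, hj⟩ := this
        obtain ⟨t, rfl⟩ := hσbij.2 j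
        exact ⟨t, by simp [lt_of_le_of_ne (hf _) (Ne.symm hj)]⟩
      set k := (Finset.univ.filter (fun k : Fin m => 0 < f (σ k))).min' hne with hkdef
      have hk : 0 < f (σ k) := by
        have := (Finset.univ.filter (fun k : Fin m => 0 < f (σ k))).min'_mem hne
        simpa using this
      have hk0 : 0 < (k : ℕ) := by
        rcases Nat.eq_zero_or_pos (k : ℕ) with h | h
        · exfalso
          have : k = ⟨0, hm⟩ := Fin.ext h
          rw [this] at hk; linarith
        · exact h
      set i : Fin m := ⟨(k : ℕ) - 1, lt_of_le_of_lt (Nat.pred_le _) k.isLt⟩ with hidef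
      have hik : (i : ℕ) + 1 = (k : ℕ) := Nat.succ_pred_eq_of_pos hk0
      have hi1 : (i : ℕ) + 1 < m := by rw [hik]; exact k.isLt
      have hfi : f (σ i) = 0 := by
        refine le_antisymm ?_ (hf _)
        by_contra hc
        push_neg at hc
        have hmem : i ∈ Finset.univ.filter (fun k : Fin m => 0 < f (σ k)) := by simp [hc]
        have := Finset.min'_le _ _ hmem
        rw [← hkdef] at this
        have : (k : ℕ) ≤ (i : ℕ) := this
        omega
      have hkeq : (⟨(i : ℕ) + 1, hi1⟩ : Fin m) = k := Fin.ext hik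
      have hpos : 0 < (if h : (i : ℕ) + 1 < m then
          T ((Finset.Ici (⟨(i : ℕ) + 1, h⟩ : Fin m)).image σ) * (f (σ ⟨(i : ℕ) + 1, h⟩) - f (σ i))
        else 0) := by
        rw [dif_pos hi1, hkeq, hfi]
        exact mul_pos (hT _ (by rw [hkeq] at *; exact ⟨σ k, Finset.mem_image_of_mem _ (Finset.mem_Ici.mpr le_rfl)⟩)) (by linarith)
      have hsum : 0 < ∑ i : Fin m, (if h : (i : ℕ) + 1 < m then
          T ((Finset.Ici (⟨(i : ℕ) + 1, h⟩ : Fin m)).image σ) * (f (σ ⟨(i : ℕ) + 1, h⟩) - f (σ i))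
        else 0) :=
        Finset.sum_pos' (fun i _ => hterm_nonneg i) ⟨i, Finset.mem_univ _, hpos⟩
      have : 0 ≤ T Finset.univ * f (σ ⟨0, hm⟩) :=
        mul_nonneg (hT _ ⟨σ ⟨0, hm⟩, Finset.mem_univ _⟩).le (hf _)
      linarith
  -- choose the minimizing threshold set
  obtain ⟨i0, -, hi0⟩ := Finset.exists_min_image (Finset.univ : Finset α)
    (fun j => R (thresholdSet f j) / T (thresholdSet f j)) ⟨Classical.arbitrary α, Finset.mem_univ _⟩
  set r := R (thresholdSet f i0) / T (thresholdSet f i0) with hrdef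
  have hratio : ∀ j : α, r * T (thresholdSet f j) ≤ R (thresholdSet f j) := by
    intro j
    have := hi0 j (Finset.mem_univ j)
    calc r * T (thresholdSet f j)
        ≤ (R (thresholdSet f j) / T (thresholdSet f j)) * T (thresholdSet f j) :=
        mul_le_mul_of_nonneg_right this (hTpos j).le
      _ = R (thresholdSet f j) := div_mul_cancel₀ _ (hTpos j).ne'
  -- main comparison: r * lovasz T f ≤ lovasz R f
  have hmain : r * lovasz T f ≤ lovasz R f := by
    rw [hlov T, hlov R, mul_add, Finset.mul_sum]
    refine add_le_add (Finset.sum_le_sum fun i _ => ?_) ?_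
    · by_cases h : (i : ℕ) + 1 < m
      · rw [dif_pos h, dif_pos h]
        set c := f (σ ⟨(i:ℕ)+1, h⟩) - f (σ i) with hcdef
        have hc : 0 ≤ c := by
          have := hmono' i ⟨(i:ℕ)+1, h⟩ (by simp [Fin.le_def])
          simp [hcdef]; linarith
        rcases hc.lt_or_eq with hc | hc
        · have heq := hsuffix i h (by simp only [hcdef] at hc; linarith)
          rw [heq]
          calc r * (T (thresholdSet f (σ ⟨(i:ℕ)+1, h⟩)) * c)
              = (r * T (thresholdSet f (σ ⟨(i:ℕ)+1, h⟩))) * c := by ring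
            _ ≤ R (thresholdSet f (σ ⟨(i:ℕ)+1, h⟩)) * c :=
              mul_le_mul_of_nonneg_right (hratio _) hc.le
        · rw [← hc, mul_zero, mul_zero, mul_zero]
      · rw [dif_neg h, dif_neg h, mul_zero]
    · rw [huniv]
      calc r * (T (thresholdSet f (σ ⟨0, hm⟩)) * f (σ ⟨0, hm⟩))
          = (r * T (thresholdSet f (σ ⟨0, hm⟩))) * f (σ ⟨0, hm⟩) := by ring
        _ ≤ R (thresholdSet f (σ ⟨0, hm⟩)) * f (σ ⟨0, hm⟩) :=
          mul_le_mul_of_nonneg_right (hratio _) (hf _)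
  refine ⟨i0, hLT, ?_⟩
  have h1 : R (thresholdSet f i0) = r * T (thresholdSet f i0) :=
    (div_mul_cancel₀ _ (hTpos i0).ne').symm
  calc R (thresholdSet f i0) * lovasz T f = (r * lovasz T f) * T (thresholdSet f i0) := by
        rw [h1]; ring
    _ ≤ lovasz R f * T (thresholdSet f i0) :=
        mul_le_mul_of_nonneg_right hmain (hTpos i0).le

/-- **Optimal thresholding inequality.** With `R(A) = vol_g(A) + ν_S·unit(A) + γ·pen(A)`:
for every `f ≥ 0`, `f ≠ 0` there is a threshold set `A_i(f) = {j : f(j) ≥ f(i)}` with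
`R(A_i(f))·assoc_S^L(f) ≤ R^L(f)·assoc_S(A_i(f))`; equivalently
`min_i R(A_i(f))/assoc_S(A_i(f)) ≤ R^L(f)/assoc_S^L(f)`. -/
theorem optimal_thresholding
    {V : Type*} [Fintype V] [DecidableEq V] (hV : Nonempty V)
    (w : V → V → ℝ) (hw_symm : ∀ i j, w i j = w j i) (hw_nonneg : ∀ i j, 0 ≤ w i j)
    (g : V → ℝ) (hg : ∀ i, 0 < g i)
    (S : Finset V) (hVp : Nonempty (Vp S))
    (p : ℕ) (hp : 1 ≤ p)
    (M : Fin p → Vp S → ℝ) (hM : ∀ j i, 0 ≤ M j i) (k l : Fin p → ℝ)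
    (dist : Vp S → Vp S → ℝ) (hdist_symm : ∀ u v, dist u v = dist v u)
    (hdist_nonneg : ∀ u v, 0 ≤ dist u v) (d0 : ℝ) (hd0 : 0 ≤ d0)
    -- the degree function d, the restricted degrees d^S, and the constants μ_S, ν_S
    (deg : V → ℝ) (hdeg : deg = fun i => ∑ j, w i j)
    (degS : Vp S → ℝ) (hdegS : degS = fun i => ∑ j ∈ S, w i.1 j)
    (muS nuS : ℝ) (hmuS : muS = ∑ i ∈ S, ∑ j ∈ S, w i j) (hnuS : nuS = ∑ i ∈ S, g i)
    -- assoc_S(A) = vol_d(A) − cut(A, V'∖A) + vol_{d^S}(A) + μ_S·unit(A)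
    (assocS : Finset (Vp S) → ℝ)
    (hassocS : assocS = fun A => (∑ i ∈ A, deg i.1) - (∑ i ∈ A, ∑ j ∈ Aᶜ, w i.1 j.1)
        + (∑ i ∈ A, degS i) + muS * (if A = ∅ then 0 else 1))
    -- the penalty function
    (pen : Finset (Vp S) → ℝ)
    (hpen : pen = fun A => if A = ∅ then 0 else
        (∑ j, max 0 ((∑ i ∈ A, M j i) - l j)) + (∑ j, max 0 (k j - ∑ i ∈ A, M j i))
        + ∑ u ∈ A, ∑ v ∈ A, max 0 (dist u v - d0))
    -- assumptions of the theorem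
    (hassoc_pos : ∀ A : Finset (Vp S), A.Nonempty → 0 < assocS A)
    (γ : ℝ) (hγ : 0 ≤ γ)
    -- R(A) = vol_g(A) + ν_S·unit(A) + γ·pen(A)
    (R : Finset (Vp S) → ℝ)
    (hR : R = fun A => (∑ i ∈ A, g i.1) + nuS * (if A = ∅ then 0 else 1) + γ * pen A) :
    ∀ f : Vp S → ℝ, (∀ i, 0 ≤ f i) → f ≠ 0 →
      ∃ i : Vp S,
        R (thresholdSet f i) * lovasz assocS f ≤ lovasz R f * assocS (thresholdSet f i)
        ∧ R (thresholdSet f i) / assocS (thresholdSet f i)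
            ≤ lovasz R f / lovasz assocS f := by
    classical
  haveI : Nonempty (Vp S) := hVp
  intro f hf hf0
  obtain ⟨i, hLT, hineq⟩ := key_core assocS R (fun A hA => hassoc_pos A hA) f hf hf0
  have hTpos : 0 < assocS (thresholdSet f i) :=
    hassoc_pos _ ⟨i, by simp [thresholdSet]⟩
  exact ⟨i, hineq, (div_le_div_iff₀ hTpos hLT).mpr hineq⟩
end

section
/- Submodularity of the penalty part pen_2: Let V' be a finite set, p ≥ 1, M_j : V' → ℝ with M_j(i) ≥ 0 for all i (j = 1,…,p), k_j, l_j ∈ ℝ, and D : V' × V' → ℝ symmetric with D(u,v) ≥ 0 for all u,v. Then the set function pen_2(A) := ∑_{j=1}^p min{l_j, ∑_{i∈A} M_j(i)} + ∑_{j=1}^p min{k_j, ∑_{i∈A} M_j(i)} − ∑_{u∈A, v∈A} D(u,v) is submodular, i.e., pen_2(A∪B) + pen_2(A∩B) ≤ pen_2(A) + pen_2(B) for all A, B ⊆ V'. -/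
/-!
Each summand `A ↦ min c (∑ i ∈ A, m i)` with `m ≥ 0` is a concave function of a modular one
and hence submodular: `A ∪ B` and `A ∩ B` carry the same total mass as `A` and `B`, but split it
more unevenly. The quadratic term is supermodular, because the pairs counted by `A` and by `B`
are, with multiplicity, among those counted by `A ∪ B` and by `A ∩ B`.
-/

open Finset

section
variable {β : Type*} [AddCommGroup β] [LinearOrder β] [IsOrderedAddMonoid β]

theorem min_add_min_le_min_add_min {a b c u w : β} (h : u + w = a + b) (hwa : w ≤ a)
    (hwb : w ≤ b) : min c u + min c w ≤ min c a + min c b := by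
  have hw : min c w ≤ w := min_le_right c w
  rw [← min_add_add_right c u, ← min_add_add_right c a, ← min_add_add_left c c b,
    ← min_add_add_left a c b]
  refine le_min (le_min ?_ ?_) (le_min ?_ ?_)
  · exact min_le_of_left_le (by gcongr; exact min_le_left c w)
  · exact min_le_of_left_le (by gcongr; exact hw.trans hwb)
  · exact min_le_of_left_le (by rw [add_comm a]; gcongr; exact hw.trans hwa)
  · exact min_le_of_right_le (h ▸ by gcongr)

theorem min_sum_union_add_min_sum_inter_le {ι : Type*} [DecidableEq ι] {m : ι → β}
    (hm : ∀ i, 0 ≤ m i) (c : β) (A B : Finset ι) :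
    min c (∑ i ∈ A ∪ B, m i) + min c (∑ i ∈ A ∩ B, m i) ≤
      min c (∑ i ∈ A, m i) + min c (∑ i ∈ B, m i) :=
  min_add_min_le_min_add_min sum_union_inter
    (sum_le_sum_of_subset_of_nonneg inter_subset_left fun i _ _ => hm i)
    (sum_le_sum_of_subset_of_nonneg inter_subset_right fun i _ _ => hm i)

end

theorem sum_sum_add_sum_sum_le_sum_sum_union_add_sum_sum_inter {α β : Type*} [DecidableEq α]
    [AddCommMonoid β] [PartialOrder β] [IsOrderedAddMonoid β] {D : α → α → β}
    (hD : ∀ u v, 0 ≤ D u v) (A B : Finset α) :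
    ∑ u ∈ A, ∑ v ∈ A, D u v + ∑ u ∈ B, ∑ v ∈ B, D u v ≤
      ∑ u ∈ A ∪ B, ∑ v ∈ A ∪ B, D u v + ∑ u ∈ A ∩ B, ∑ v ∈ A ∩ B, D u v := by
  simp only [← sum_product' _ _ D]
  rw [← sum_union_inter, product_inter_product]
  have hsub : A ×ˢ A ∪ B ×ˢ B ⊆ (A ∪ B) ×ˢ (A ∪ B) :=
    union_subset (product_subset_product subset_union_left subset_union_left)
      (product_subset_product subset_union_right subset_union_right)
  gcongr
  exact fun x _ _ => hD x.1 x.2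

theorem pen2_submodular_general
    {α : Type*} [DecidableEq α]
    (p : ℕ)
    (M : Fin p → α → ℝ) (hM : ∀ j i, 0 ≤ M j i)
    (k l : Fin p → ℝ)
    (D : α → α → ℝ) (hD_nonneg : ∀ u v, 0 ≤ D u v)
    (pen₂ : Finset α → ℝ)
    (hpen₂ : pen₂ = fun A =>
        (∑ j, min (l j) (∑ i ∈ A, M j i)) + (∑ j, min (k j) (∑ i ∈ A, M j i))
        - ∑ u ∈ A, ∑ v ∈ A, D u v) :
    ∀ A B : Finset α, pen₂ (A ∪ B) + pen₂ (A ∩ B) ≤ pen₂ A + pen₂ B := by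
  intro A B
  subst hpen₂
  have hl := sum_le_sum fun j (_ : j ∈ univ) =>
    min_sum_union_add_min_sum_inter_le (hM j) (l j) A B
  have hk := sum_le_sum fun j (_ : j ∈ univ) =>
    min_sum_union_add_min_sum_inter_le (hM j) (k j) A B
  have hD := sum_sum_add_sum_sum_le_sum_sum_union_add_sum_sum_inter hD_nonneg A B
  simp only [sum_add_distrib] at hl hk
  linarith

/-- **Submodularity of the penalty part `pen_2`.** With `M_j ≥ 0` and `D` symmetric
nonnegative, the set function
`pen_2(A) = ∑_j min{l_j, ∑_{i∈A} M_j(i)} + ∑_j min{k_j, ∑_{i∈A} M_j(i)} − ∑_{u,v∈A} D(u,v)`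
is submodular. -/
theorem pen2_submodular
    {α : Type*} [Fintype α] [DecidableEq α]
    (p : ℕ) (hp : 1 ≤ p)
    (M : Fin p → α → ℝ) (hM : ∀ j i, 0 ≤ M j i)
    (k l : Fin p → ℝ)
    (D : α → α → ℝ) (hD_symm : ∀ u v, D u v = D v u) (hD_nonneg : ∀ u v, 0 ≤ D u v)
    (pen₂ : Finset α → ℝ)
    (hpen₂ : pen₂ = fun A =>
        (∑ j, min (l j) (∑ i ∈ A, M j i)) + (∑ j, min (k j) (∑ i ∈ A, M j i))
        - ∑ u ∈ A, ∑ v ∈ A, D u v) :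
    ∀ A B : Finset α, pen₂ (A ∪ B) + pen₂ (A ∩ B) ≤ pen₂ A + pen₂ B :=
  pen2_submodular_general p M hM k l D hD_nonneg pen₂ hpen₂
end

section
/- Lovász extension of the graph cut: Let V' be a finite nonempty set and w : V' × V' → ℝ symmetric with w(i,j) ≥ 0 for all i,j. Then the Lovász extension of the set function R(A) = ∑_{i∈A, j∈V'∖A} w(i,j) satisfies R^L(f) = (1/2)·∑_{i,j∈V'} w(i,j)·|f(i) − f(j)| for every f : V' → ℝ. -/
open Finset

lemma telescope' (G : ℕ → ℝ) (p q : ℕ) (h : p ≤ q) :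
    ∑ n ∈ Finset.Ico p q, (G (n+1) - G n) = G q - G p := by
  rw [Finset.sum_Ico_eq_sum_range]
  have H := Finset.sum_range_sub (fun k => G (p + k)) (q - p)
  calc ∑ k ∈ range (q - p), (G (p + k + 1) - G (p + k))
      = ∑ k ∈ range (q - p), (G (p + (k + 1)) - G (p + k)) :=
        Finset.sum_congr rfl fun k _ => by rw [add_assoc]
    _ = G (p + (q - p)) - G (p + 0) := H
    _ = G q - G p := by congr 2 <;> omega

lemma image_compl_equiv {β γ : Type*} [Fintype β] [Fintype γ] [DecidableEq β] [DecidableEq γ]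
    (σ' : β ≃ γ) (S : Finset β) : (S.image σ')ᶜ = Sᶜ.image σ' := by
  ext x
  simp only [Finset.mem_compl, Finset.mem_image]
  constructor
  · intro hx
    exact ⟨σ'.symm x, fun hs => hx ⟨_, hs, σ'.apply_symm_apply x⟩, σ'.apply_symm_apply x⟩
  · rintro ⟨a, ha, rfl⟩ ⟨b, hb, hba⟩
    exact ha (σ'.injective hba ▸ hb)

lemma cut_image {β γ : Type*} [Fintype β] [Fintype γ] [DecidableEq β] [DecidableEq γ]
    (σ' : β ≃ γ) (w : γ → γ → ℝ) (S : Finset β) :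
    ∑ i ∈ S.image σ', ∑ j ∈ (S.image σ')ᶜ, w i j = ∑ a ∈ S, ∑ b ∈ Sᶜ, w (σ' a) (σ' b) := by
  rw [image_compl_equiv, Finset.sum_image (fun a _ b _ h => σ'.injective h)]
  exact Finset.sum_congr rfl fun a _ => Finset.sum_image (fun a _ b _ h => σ'.injective h)

lemma lovasz_cut_aux {α : Type*} [Fintype α] [DecidableEq α]
    (w : α → α → ℝ) (hw_symm : ∀ i j, w i j = w j i)
    (f : α → ℝ) {m : ℕ} (σ' : Fin m ≃ α) (hmono : Monotone (f ∘ σ')) :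
    (∑ i : Fin m, if h : (i : ℕ) + 1 < m then
        (∑ x ∈ (Finset.Ici (⟨(i : ℕ) + 1, h⟩ : Fin m)).image σ',
          ∑ j ∈ ((Finset.Ici (⟨(i : ℕ) + 1, h⟩ : Fin m)).image σ')ᶜ, w x j)
          * (f (σ' ⟨(i : ℕ) + 1, h⟩) - f (σ' i))
      else 0)
    = (1 / 2) * ∑ i, ∑ j, w i j * |f i - f j| := by
  set g : Fin m → ℝ := f ∘ σ' with hg
  set GN : ℕ → ℝ := fun n => if h : n < m then g ⟨n, h⟩ else 0 with hGN
  -- basic interval facts in Fin m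
  have hIci : ∀ (i : Fin m) (h : (i : ℕ) + 1 < m),
      Finset.Ici (⟨(i : ℕ) + 1, h⟩ : Fin m) = Finset.Ioi i := by
    intro i h; ext a
    simp only [Finset.mem_Ici, Finset.mem_Ioi, Fin.le_def, Fin.lt_def, Fin.val_mk]
    omega
  have hcomplIoi : ∀ i : Fin m, (Finset.Ioi i)ᶜ = Finset.Iic i := by
    intro i; ext a
    simp only [Finset.mem_compl, Finset.mem_Ioi, Finset.mem_Iic, Fin.le_def, Fin.lt_def, not_lt]
  -- step 1: rewrite each summand
  have step1 : ∀ i : Fin m,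
      (if h : (i : ℕ) + 1 < m then
        (∑ x ∈ (Finset.Ici (⟨(i : ℕ) + 1, h⟩ : Fin m)).image σ',
          ∑ j ∈ ((Finset.Ici (⟨(i : ℕ) + 1, h⟩ : Fin m)).image σ')ᶜ, w x j)
          * (f (σ' ⟨(i : ℕ) + 1, h⟩) - f (σ' i))
      else 0)
      = ∑ a ∈ Finset.Ioi i, ∑ b ∈ Finset.Iic i,
          w (σ' a) (σ' b) * (GN ((i : ℕ) + 1) - GN i) := by
    intro i
    by_cases h : (i : ℕ) + 1 < m
    · rw [dif_pos h, cut_image σ' w, hIci i h, hcomplIoi]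
      have h1 : GN ((i : ℕ) + 1) = f (σ' ⟨(i : ℕ) + 1, h⟩) := by
        simp only [hGN, dif_pos h]; rfl
      have h2 : GN (i : ℕ) = f (σ' i) := by
        simp only [hGN, dif_pos i.isLt]; rfl
      rw [h1, h2, Finset.sum_mul]
      exact Finset.sum_congr rfl fun a _ => Finset.sum_mul _ _ _
    · rw [dif_neg h]
      have : Finset.Ioi i = (∅ : Finset (Fin m)) := by
        ext a; simp only [Finset.mem_Ioi, Finset.notMem_empty, iff_false, not_lt, Fin.le_def]
        have := a.isLt; omega
      rw [this, Finset.sum_empty]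
  rw [Finset.sum_congr rfl fun i _ => step1 i]
  -- step 2: swap order of summation
  have swap1 : ∑ i : Fin m, ∑ a ∈ Finset.Ioi i, ∑ b ∈ Finset.Iic i,
        w (σ' a) (σ' b) * (GN ((i : ℕ) + 1) - GN i)
      = ∑ a : Fin m, ∑ i ∈ Finset.Iio a, ∑ b ∈ Finset.Iic i,
        w (σ' a) (σ' b) * (GN ((i : ℕ) + 1) - GN i) :=
    Finset.sum_comm' (by intro i a; simp)
  have swap2 : ∀ a : Fin m, ∑ i ∈ Finset.Iio a, ∑ b ∈ Finset.Iic i,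
        w (σ' a) (σ' b) * (GN ((i : ℕ) + 1) - GN i)
      = ∑ b ∈ Finset.Iio a, ∑ i ∈ Finset.Ico b a,
        w (σ' a) (σ' b) * (GN ((i : ℕ) + 1) - GN i) := by
    intro a
    refine Finset.sum_comm' ?_
    intro i b
    simp only [Finset.mem_Iio, Finset.mem_Iic, Finset.mem_Ico, Fin.le_def, Fin.lt_def]
    omega
  rw [swap1, Finset.sum_congr rfl fun a _ => swap2 a]
  -- step 3: telescoping
  have tele : ∀ a b : Fin m, b < a →
      ∑ i ∈ Finset.Ico b a, (GN ((i : ℕ) + 1) - GN (i : ℕ)) = g a - g b := by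
    intro a b hba
    have hmap : (Finset.Ico b a).map Fin.valEmbedding = Finset.Ico (b : ℕ) (a : ℕ) :=
      Fin.map_valEmbedding_Ico b a
    have : ∑ i ∈ Finset.Ico b a, (GN ((i : ℕ) + 1) - GN (i : ℕ))
        = ∑ n ∈ Finset.Ico (b : ℕ) (a : ℕ), (GN (n + 1) - GN n) := by
      rw [← hmap, Finset.sum_map]; rfl
    rw [this, telescope' GN _ _ (le_of_lt hba)]
    simp only [hGN, dif_pos a.isLt, dif_pos b.isLt]
  have step3 : ∀ a : Fin m, ∀ b ∈ Finset.Iio a,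
      ∑ i ∈ Finset.Ico b a, w (σ' a) (σ' b) * (GN ((i : ℕ) + 1) - GN i)
      = w (σ' a) (σ' b) * |g a - g b| := by
    intro a b hb
    rw [Finset.mem_Iio] at hb
    rw [← Finset.mul_sum, tele a b hb]
    congr 1
    rw [abs_of_nonneg (sub_nonneg.2 (hmono (le_of_lt hb)))]
  rw [Finset.sum_congr rfl fun a _ => Finset.sum_congr rfl (step3 a)]
  -- step 4: RHS reindexing and symmetry
  have reidx : ∑ i, ∑ j, w i j * |f i - f j|
      = ∑ a : Fin m, ∑ b : Fin m, w (σ' a) (σ' b) * |g a - g b| := by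
    rw [← Equiv.sum_comp σ' (fun i => ∑ j, w i j * |f i - f j|)]
    exact Finset.sum_congr rfl fun a _ =>
      (Equiv.sum_comp σ' (fun j => w (σ' a) j * |f (σ' a) - f j|)).symm
  rw [reidx]
  have split : ∀ a : Fin m, ∑ b : Fin m, w (σ' a) (σ' b) * |g a - g b|
      = (∑ b ∈ Finset.Iio a, w (σ' a) (σ' b) * |g a - g b|)
        + ∑ b ∈ Finset.Ioi a, w (σ' a) (σ' b) * |g a - g b| := by
    intro a
    have hcompl : (Finset.Iio a)ᶜ = Finset.Ici a := by
      ext x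
      simp only [Finset.mem_compl, Finset.mem_Iio, Finset.mem_Ici, Fin.le_def, Fin.lt_def, not_lt]
    rw [← Finset.sum_add_sum_compl (Finset.Iio a), hcompl, ← Finset.Ioi_insert,
      Finset.sum_insert (Finset.notMem_Ioi_self)]
    simp
  have symm_part : ∑ a : Fin m, ∑ b ∈ Finset.Ioi a, w (σ' a) (σ' b) * |g a - g b|
      = ∑ a : Fin m, ∑ b ∈ Finset.Iio a, w (σ' a) (σ' b) * |g a - g b| := by
    rw [Finset.sum_comm' (s' := fun b => Finset.Iio b) (t' := Finset.univ) (by intro a b; simp)]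
    exact Finset.sum_congr rfl fun b _ => Finset.sum_congr rfl fun a _ => by
      rw [hw_symm, abs_sub_comm]
  rw [Finset.sum_congr rfl fun a _ => split a, Finset.sum_add_distrib, symm_part]
  ring

/-- **Lovász extension of the graph cut.** For symmetric nonnegative `w`, the Lovász extension
of `R(A) = ∑_{i∈A, j∈V'∖A} w(i,j)` is `R^L(f) = (1/2)·∑_{i,j} w(i,j)·|f(i) − f(j)|`. -/
theorem lovasz_cut
    {α : Type*} [Fintype α] [DecidableEq α] [Nonempty α]
    (w : α → α → ℝ) (hw_symm : ∀ i j, w i j = w j i) (hw_nonneg : ∀ i j, 0 ≤ w i j)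
    (f : α → ℝ) :
    lovasz (fun A => ∑ i ∈ A, ∑ j ∈ Aᶜ, w i j) f
      = (1 / 2) * ∑ i, ∑ j, w i j * |f i - f j| := by
  simp only [lovasz]
  have hzero : (∑ i : α, ∑ j ∈ (Finset.univ : Finset α)ᶜ, w i j) = 0 := by
    simp [Finset.compl_univ]
  rw [hzero, zero_mul, add_zero]
  exact lovasz_cut_aux w hw_symm f
    ((Tuple.sort (f ∘ (Fintype.equivFin α).symm)).trans (Fintype.equivFin α).symm)
    (Tuple.monotone_sort (f ∘ (Fintype.equivFin α).symm))
end

section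
/- Strong duality for the inner convex problem of RatioDCA: Let m ≥ 1, let w : {1,…,m} × {1,…,m} → ℝ be symmetric with w(i,j) ≥ 0, let c ∈ ℝ^m, λ ≥ 0, σ ≥ 0. Then min over u ∈ ℝ^m with u ≥ 0 of [ (1/2)‖u‖₂² + ⟨u,c⟩ + σ·max_i u_i + (λ/2)·∑_{i,j} w(i,j)·|u_i − u_j| ] equals max over pairs (α, v), where α : {1,…,m}² → ℝ is antisymmetric (α(i,j) = −α(j,i)) with |α(i,j)| ≤ 1 for all i,j, and v ∈ ℝ^m with v_i ≥ 0 and ∑_i v_i = 1, of −(1/2)·‖P₊(−c − (λ/2)·Aα − σ·v)‖₂², where (Aα)_i := ∑_j w(i,j)·(α(i,j) − α(j,i)) and P₊ : ℝ^m → ℝ^m is the componentwise positive part, (P₊(x))_i = max{x_i, 0}. -/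
/-!
Write `r = -c - (λ/2)·Aα - σ·v` for a dual point and `L(u, r) = ½‖u‖² - ⟨u, r⟩`. For every `u`
the primal objective is the maximum of `L(u, ·)` over the feasible dual points: over `α` it is
attained at `α(i,j) = sign(u_i - u_j)`, over `v` at a vertex of the simplex where `u` is largest.
On the other hand `min_{u ≥ 0} L(u, r) = -½‖P₊ r‖²`, attained at `u = P₊ r`; this is weak duality.
The feasible dual points form a compact convex set, so the dual objective has a maximiser `r`.
The dual objective is concave with gradient `-P₊`, which is `1`-Lipschitz, so maximality of `r`
gives `⟨P₊ r, s - r⟩ ≥ 0` for all feasible `s`, i.e. `r` also maximises `L(P₊ r, ·)`. Hence the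
primal value at `P₊ r` equals the dual value at `r`.
-/
open Finset Filter Topology Set

lemma neg_half_sq_max_le_of_nonneg {u : ℝ} (hu : 0 ≤ u) (x : ℝ) :
    -(1 / 2) * max x 0 ^ 2 ≤ 1 / 2 * u ^ 2 - u * x := by
  rcases le_total x 0 with h | h
  · rw [max_eq_right h]; nlinarith
  · rw [max_eq_left h]; nlinarith [sq_nonneg (u - x)]

lemma half_sq_max_sub_mul_self (x : ℝ) :
    1 / 2 * max x 0 ^ 2 - max x 0 * x = -(1 / 2) * max x 0 ^ 2 := by
  rcases le_total x 0 with h | h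
  · rw [max_eq_right h]; ring
  · rw [max_eq_left h]; ring

lemma neg_half_sq_max_add_ge (x d : ℝ) :
    -(1 / 2) * max x 0 ^ 2 - max x 0 * d - d ^ 2 / 2 ≤ -(1 / 2) * max (x + d) 0 ^ 2 := by
  rcases le_total x 0 with h | h <;> rcases le_total (x + d) 0 with h' | h' <;>
    simp only [max_eq_left, max_eq_right, h, h'] <;> nlinarith

namespace NonnegQuadratic

variable {ι : Type*} [Fintype ι]

noncomputable def dualValue (r : ι → ℝ) : ℝ := -(1 / 2) * ∑ i, max (r i) 0 ^ 2

noncomputable def lagrangian (u r : ι → ℝ) : ℝ := 1 / 2 * ∑ i, u i ^ 2 - ∑ i, u i * r i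

theorem continuous_dualValue : Continuous (dualValue : (ι → ℝ) → ℝ) := by
  unfold dualValue; fun_prop

theorem dualValue_le_lagrangian {u : ι → ℝ} (hu : 0 ≤ u) (r : ι → ℝ) :
    dualValue r ≤ lagrangian u r := by
  simp only [dualValue, lagrangian, mul_sum, ← sum_sub_distrib]
  exact sum_le_sum fun i _ => neg_half_sq_max_le_of_nonneg (hu i) (r i)

theorem lagrangian_posPart (r : ι → ℝ) : lagrangian (fun i => max (r i) 0) r = dualValue r := by
  simp only [dualValue, lagrangian, mul_sum, ← sum_sub_distrib]
  exact sum_congr rfl fun i _ => half_sq_max_sub_mul_self (r i)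

theorem dualValue_add_smul_ge (r d : ι → ℝ) (t : ℝ) :
    dualValue r - t * ∑ i, max (r i) 0 * d i - t ^ 2 / 2 * ∑ i, d i ^ 2
      ≤ dualValue (r + t • d) := by
  simp only [dualValue, mul_sum, ← sum_sub_distrib]
  refine sum_le_sum fun i _ => ?_
  have := neg_half_sq_max_add_ge (r i) (t * d i)
  simp only [Pi.add_apply, Pi.smul_apply, smul_eq_mul]
  linarith

theorem sum_posPart_mul_sub_nonneg {R : Set (ι → ℝ)} (hR : Convex ℝ R) {r s : ι → ℝ}
    (hr : r ∈ R) (hs : s ∈ R) (hmax : IsMaxOn dualValue R r) :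
    0 ≤ ∑ i, max (r i) 0 * (s i - r i) := by
  set S := ∑ i, max (r i) 0 * (s i - r i)
  set C := ∑ i, (s i - r i) ^ 2
  have hlim : Tendsto (fun t : ℝ => -(t * C / 2)) (𝓝[>] 0) (𝓝 0) := by
    refine tendsto_nhdsWithin_of_tendsto_nhds ?_
    exact (by fun_prop : Continuous fun t : ℝ => -(t * C / 2)).tendsto' 0 0 (by simp)
  refine le_of_tendsto hlim ?_
  filter_upwards [Ioo_mem_nhdsGT one_pos] with t ht
  have hmem : r + t • (s - r) ∈ R := hR.add_smul_sub_mem hr hs ⟨ht.1.le, ht.2.le⟩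
  have hle := (dualValue_add_smul_ge r (s - r) t).trans (hmax hmem)
  simp only [Pi.sub_apply] at hle
  have : t * (-(t * C / 2)) ≤ t * S := by nlinarith
  exact le_of_mul_le_mul_left this ht.1

theorem lagrangian_posPart_le_dualValue {R : Set (ι → ℝ)} (hR : Convex ℝ R) {r s : ι → ℝ}
    (hr : r ∈ R) (hs : s ∈ R) (hmax : IsMaxOn dualValue R r) :
    lagrangian (fun i => max (r i) 0) s ≤ dualValue r := by
  have h := sum_posPart_mul_sub_nonneg hR hr hs hmax
  rw [← lagrangian_posPart r]
  simp only [lagrangian, mul_sub, sum_sub_distrib] at h ⊢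
  linarith

theorem sInf_image_eq_sSup_image_dualValue {R : Set (ι → ℝ)} (hR : Convex ℝ R)
    (hR_compact : IsCompact R) (hR_nonempty : R.Nonempty) {P : (ι → ℝ) → ℝ}
    (hP : ∀ u, 0 ≤ u → IsGreatest (lagrangian u '' R) (P u)) :
    sInf (P '' Ici 0) = sSup (dualValue '' R) := by
  obtain ⟨r, hr, hmax⟩ := hR_compact.exists_isMaxOn hR_nonempty continuous_dualValue.continuousOn
  set u : ι → ℝ := fun i => max (r i) 0
  have hu : 0 ≤ u := fun i => le_max_right _ _
  have hPu : P u = dualValue r := by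
    obtain ⟨s, hs, hPs⟩ := (hP u hu).1
    refine le_antisymm ?_ ?_
    · exact hPs ▸ lagrangian_posPart_le_dualValue hR hr hs hmax
    · exact lagrangian_posPart r ▸ (hP u hu).2 ⟨r, hr, rfl⟩
  have hleast : IsLeast (P '' Ici 0) (dualValue r) := by
    refine ⟨⟨u, hu, hPu⟩, ?_⟩
    rintro _ ⟨v, hv, rfl⟩
    exact (dualValue_le_lagrangian hv r).trans ((hP v hv).2 ⟨r, hr, rfl⟩)
  have hgreatest : IsGreatest (dualValue '' R) (dualValue r) :=
    ⟨⟨r, hr, rfl⟩, by rintro _ ⟨s, hs, rfl⟩; exact hmax hs⟩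
  rw [hleast.csInf_eq, hgreatest.csSup_eq]

end NonnegQuadratic

namespace RatioDCA

open NonnegQuadratic

variable {ι : Type*}

def antisymmUnitCube (ι : Type*) : Set (ι → ι → ℝ) :=
  {α | (∀ i j, α i j = -α j i) ∧ ∀ i j, |α i j| ≤ 1}

theorem convex_antisymmUnitCube : Convex ℝ (antisymmUnitCube ι) := by
  rintro α ⟨hα, hα'⟩ β ⟨hβ, hβ'⟩ a b ha hb hab
  refine ⟨fun i j => ?_, fun i j => ?_⟩
  · simp only [Pi.add_apply, Pi.smul_apply, smul_eq_mul]
    rw [hα i j, hβ i j]; ring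
  · calc |(a • α + b • β) i j| ≤ a * |α i j| + b * |β i j| := by
          simp only [Pi.add_apply, Pi.smul_apply, smul_eq_mul]
          refine (abs_add_le _ _).trans_eq ?_
          rw [abs_mul, abs_mul, abs_of_nonneg ha, abs_of_nonneg hb]
      _ ≤ a * 1 + b * 1 := by gcongr <;> [exact hα' i j; exact hβ' i j]
      _ = 1 := by rw [mul_one, mul_one, hab]

theorem isCompact_antisymmUnitCube : IsCompact (antisymmUnitCube ι) := by
  refine (isCompact_univ_pi fun _ => isCompact_univ_pi fun _ => isCompact_Icc (a := -1) (b := 1))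
    |>.of_isClosed_subset ?_ fun α hα i _ j _ => abs_le.mp (hα.2 i j)
  simp only [antisymmUnitCube, ofPred_and, ofPred_forall]
  exact (isClosed_iInter fun i => isClosed_iInter fun j => isClosed_eq (by fun_prop) (by fun_prop))
    |>.inter (isClosed_iInter fun i => isClosed_iInter fun j =>
      isClosed_le (by fun_prop) (by fun_prop))

variable [Fintype ι]

noncomputable def residual (w : ι → ι → ℝ) (c : ι → ℝ) (lam σ : ℝ)
    (p : (ι → ι → ℝ) × (ι → ℝ)) : ι → ℝ :=
  fun i => -c i - lam / 2 * ∑ j, w i j * (p.1 i j - p.1 j i) - σ * p.2 i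

noncomputable def primal [Nonempty ι] (w : ι → ι → ℝ) (c : ι → ℝ) (lam σ : ℝ) (u : ι → ℝ) : ℝ :=
  1 / 2 * ∑ i, u i ^ 2 + ∑ i, u i * c i + σ * univ.sup' univ_nonempty u
    + lam / 2 * ∑ i, ∑ j, w i j * |u i - u j|

variable (w : ι → ι → ℝ) (c : ι → ℝ) (lam σ : ℝ)

theorem continuous_residual : Continuous (residual w c lam σ) := by
  unfold residual; fun_prop

theorem convex_image_residual {F : Set ((ι → ι → ℝ) × (ι → ℝ))} (hF : Convex ℝ F) :
    Convex ℝ (residual w c lam σ '' F) := by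
  rintro _ ⟨p, hp, rfl⟩ _ ⟨q, hq, rfl⟩ a b ha hb hab
  refine ⟨a • p + b • q, hF hp hq ha hb hab, funext fun i => ?_⟩
  have hsum : ∑ j, w i j * ((a • p + b • q).1 i j - (a • p + b • q).1 j i)
      = a * ∑ j, w i j * (p.1 i j - p.1 j i) + b * ∑ j, w i j * (q.1 i j - q.1 j i) := by
    rw [mul_sum, mul_sum, ← sum_add_distrib]
    refine sum_congr rfl fun j _ => ?_
    simp only [Prod.fst_add, Prod.smul_fst, Pi.add_apply, Pi.smul_apply, smul_eq_mul]
    ring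
  simp only [residual, hsum, Prod.snd_add, Prod.smul_snd, Pi.add_apply, Pi.smul_apply, smul_eq_mul]
  linear_combination c i * hab

theorem lagrangian_residual (u : ι → ℝ) (α : ι → ι → ℝ) (v : ι → ℝ) :
    lagrangian u (residual w c lam σ (α, v))
      = 1 / 2 * ∑ i, u i ^ 2 + ∑ i, u i * c i
        + lam / 2 * ∑ i, u i * ∑ j, w i j * (α i j - α j i) + σ * ∑ i, u i * v i := by
  have h : ∀ i, u i * residual w c lam σ (α, v) i = -(u i * c i)
      - lam / 2 * (u i * ∑ j, w i j * (α i j - α j i)) - σ * (u i * v i) := fun i => by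
    simp only [residual]; ring
  simp only [lagrangian, h, sum_sub_distrib, sum_neg_distrib, ← mul_sum]
  ring

theorem sum_mul_sum_sub_eq (hw : ∀ i j, w i j = w j i) (u : ι → ℝ) (α : ι → ι → ℝ) :
    ∑ i, u i * ∑ j, w i j * (α i j - α j i) = ∑ i, ∑ j, w i j * α i j * (u i - u j) := by
  have hswap : ∑ i, ∑ j, u i * (w i j * α j i) = ∑ i, ∑ j, w i j * α i j * u j := by
    rw [sum_comm]
    exact sum_congr rfl fun i _ => sum_congr rfl fun j _ => by rw [hw]; ring
  simp only [mul_sum, mul_sub, sum_sub_distrib, hswap]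
  congr 1
  exact sum_congr rfl fun i _ => sum_congr rfl fun j _ => by ring

theorem isGreatest_image_antisymmUnitCube (hw : ∀ i j, w i j = w j i) (hw' : ∀ i j, 0 ≤ w i j)
    (u : ι → ℝ) :
    IsGreatest ((fun α => ∑ i, u i * ∑ j, w i j * (α i j - α j i)) '' antisymmUnitCube ι)
      (∑ i, ∑ j, w i j * |u i - u j|) := by
  simp only [sum_mul_sum_sub_eq w hw]
  refine ⟨⟨fun i j => SignType.sign (u i - u j), ⟨fun i j => ?_, fun i j => ?_⟩, ?_⟩, ?_⟩
  · dsimp only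
    rw [← neg_sub, Left.sign_neg, SignType.coe_neg]
  · rcases lt_trichotomy (u i - u j) 0 with h | h | h <;> simp [h]
  · exact sum_congr rfl fun i _ => sum_congr rfl fun j _ => by rw [mul_assoc, sign_mul_self]
  · rintro _ ⟨α, ⟨-, hα⟩, rfl⟩
    refine sum_le_sum fun i _ => sum_le_sum fun j _ => ?_
    rw [mul_assoc]
    refine mul_le_mul_of_nonneg_left ((le_abs_self _).trans ?_) (hw' i j)
    rw [abs_mul]
    exact mul_le_of_le_one_left (abs_nonneg _) (hα i j)

theorem isGreatest_image_stdSimplex [Nonempty ι] (u : ι → ℝ) :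
    IsGreatest ((fun v => ∑ i, u i * v i) '' stdSimplex ℝ ι) (univ.sup' univ_nonempty u) := by
  classical
  obtain ⟨i₀, -, hi₀⟩ := exists_mem_eq_sup' univ_nonempty u
  refine ⟨⟨Pi.single i₀ 1, single_mem_stdSimplex ℝ i₀, ?_⟩, ?_⟩
  · simp [Pi.single_apply, hi₀]
  · rintro _ ⟨v, ⟨hv, hv'⟩, rfl⟩
    calc ∑ i, u i * v i ≤ ∑ i, univ.sup' univ_nonempty u * v i :=
          sum_le_sum fun i _ => mul_le_mul_of_nonneg_right (le_sup' u (mem_univ i)) (hv i)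
      _ = univ.sup' univ_nonempty u := by rw [← mul_sum, hv', mul_one]

theorem isGreatest_lagrangian_image_residual [Nonempty ι] (hw : ∀ i j, w i j = w j i)
    (hw' : ∀ i j, 0 ≤ w i j) (hlam : 0 ≤ lam) (hσ : 0 ≤ σ) (u : ι → ℝ) :
    IsGreatest (lagrangian u '' (residual w c lam σ '' (antisymmUnitCube ι ×ˢ stdSimplex ℝ ι)))
      (primal w c lam σ u) := by
  have hα := isGreatest_image_antisymmUnitCube w hw hw' u
  have hv := isGreatest_image_stdSimplex u
  refine ⟨?_, ?_⟩
  · obtain ⟨α, hαA, hαeq⟩ := hα.1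
    obtain ⟨v, hvS, hveq⟩ := hv.1
    dsimp only at hαeq hveq
    refine ⟨_, ⟨(α, v), ⟨hαA, hvS⟩, rfl⟩, ?_⟩
    rw [lagrangian_residual, hαeq, hveq, primal]
    ring
  · rintro _ ⟨_, ⟨⟨α, v⟩, ⟨hαA, hvS⟩, rfl⟩, rfl⟩
    rw [lagrangian_residual, primal]
    have := mul_le_mul_of_nonneg_left (hα.2 ⟨α, hαA, rfl⟩) (by positivity : 0 ≤ lam / 2)
    have := mul_le_mul_of_nonneg_left (hv.2 ⟨v, hvS, rfl⟩) hσ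
    linarith

end RatioDCA

open NonnegQuadratic RatioDCA

/-- **Strong duality for the inner convex problem of RatioDCA.** The minimum over `u ≥ 0` of
`(1/2)‖u‖² + ⟨u,c⟩ + σ·max_i u_i + (λ/2)·∑_{i,j} w(i,j)·|u_i − u_j|` equals the maximum over
antisymmetric `α` with `‖α‖_∞ ≤ 1` and `v` in the simplex of
`−(1/2)·‖P₊(−c − (λ/2)·Aα − σ·v)‖²`, where `(Aα)_i = ∑_j w(i,j)(α(i,j) − α(j,i))` and
`P₊` is the componentwise positive part. -/
theorem ratioDCA_inner_strong_duality
    (m : ℕ) (hm : 1 ≤ m)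
    (w : Fin m → Fin m → ℝ) (hw_symm : ∀ i j, w i j = w j i) (hw_nonneg : ∀ i j, 0 ≤ w i j)
    (c : Fin m → ℝ) (lam : ℝ) (hlam : 0 ≤ lam) (σ : ℝ) (hσ : 0 ≤ σ) :
    sInf {x : ℝ | ∃ u : Fin m → ℝ, (∀ i, 0 ≤ u i) ∧
        x = (1 / 2) * (∑ i, (u i) ^ 2) + (∑ i, u i * c i)
          + σ * (Finset.univ.sup' ⟨⟨0, hm⟩, Finset.mem_univ _⟩ u)
          + (lam / 2) * ∑ i, ∑ j, w i j * |u i - u j|}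
      = sSup {x : ℝ | ∃ α : Fin m → Fin m → ℝ, ∃ v : Fin m → ℝ,
          (∀ i j, α i j = -α j i) ∧ (∀ i j, |α i j| ≤ 1)
          ∧ (∀ i, 0 ≤ v i) ∧ (∑ i, v i) = 1
          ∧ x = -(1 / 2) * ∑ i,
              (max (-c i - (lam / 2) * (∑ j, w i j * (α i j - α j i)) - σ * v i) 0) ^ 2} := by
  have : Nonempty (Fin m) := ⟨⟨0, hm⟩⟩
  have hF : (antisymmUnitCube (Fin m) ×ˢ stdSimplex ℝ (Fin m)).Nonempty :=
    ⟨(0, Pi.single ⟨0, hm⟩ 1), ⟨fun _ _ => by simp, fun _ _ => by simp⟩,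
      single_mem_stdSimplex ℝ _⟩
  have key := sInf_image_eq_sSup_image_dualValue
    (convex_image_residual w c lam σ (convex_antisymmUnitCube.prod (convex_stdSimplex ℝ _)))
    ((isCompact_antisymmUnitCube.prod (isCompact_stdSimplex ℝ _)).image
      (continuous_residual w c lam σ))
    (hF.image _)
    (fun u _ => isGreatest_lagrangian_image_residual w c lam σ hw_symm hw_nonneg hlam hσ u)
  convert key using 2
  · ext x
    exact ⟨fun ⟨u, hu, hx⟩ => ⟨u, hu, hx.symm⟩, fun ⟨u, hu, hx⟩ => ⟨u, hu, hx.symm⟩⟩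
  · ext x
    constructor
    · rintro ⟨α, v, h₁, h₂, h₃, h₄, rfl⟩
      exact ⟨_, ⟨(α, v), ⟨⟨h₁, h₂⟩, h₃, h₄⟩, rfl⟩, rfl⟩
    · rintro ⟨_, ⟨⟨α, v⟩, ⟨⟨h₁, h₂⟩, h₃, h₄⟩, rfl⟩, rfl⟩
      exact ⟨α, v, h₁, h₂, h₃, h₄, rfl⟩
end

section
/- LP relaxation of the generalized densest subgraph problem: For every nonempty A ⊆ V' satisfying k_j ≤ vol_{M_j}(A) ≤ l_j for all j = 1,…,p and dist(u,v) ≤ d_0 for all u,v ∈ A, define t = 1/(vol_g(A) + ν_S), f : V' → ℝ by f(i) = t if i ∈ A and f(i) = 0 otherwise, and α : V' × V' → ℝ by α(i,j) = t if i ∈ A and j ∈ A, and α(i,j) = 0 otherwise. Then (t, f, α) satisfies all the LP constraints: t·k_j ≤ ∑_i M_j(i)·f(i) ≤ t·l_j for all j; f(u) + f(v) ≤ t whenever dist(u,v) > d_0; t ≥ 0; 0 ≤ α(i,j) ≤ min{f(i), f(j)} for all i,j; 0 ≤ f(i) ≤ t for all i; and ∑_i g(i)·f(i) + t·ν_S =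 1. Moreover the LP objective ∑_{i,j∈V'} w(i,j)·α(i,j) + 2·∑_{i∈V'} d^S(i)·f(i) + t·μ_S equals (∑_{i∈A, j∈A} w(i,j) + 2·vol_{d^S}(A) + μ_S)/(vol_g(A) + ν_S). Consequently, the optimal value of the LP is an upper bound on the maximum of (∑_{i∈A, j∈A} w(i,j) + 2·vol_{d^S}(A) + μ_S)/(vol_g(A) + ν_S) over all such A. -/
/-!
The indicator point `f = t·1_A`, `α = t·1_{A×A}` with `t = 1/(vol_g(A) + ν_S)` is feasible: the
skill constraints are those of `A` scaled by `t`, a pair at distance `> d₀` cannot lie in `A`, and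
the normalisation constraint is the choice of `t`. Its objective is the density of `A` because
all sums against indicators collapse to sums over `A`. For the final inequality, `sSup` needs the
LP values to be bounded above: normalisation gives `f i ≤ 1/g i` and `t ≤ 1/ν_S` (when `S` is
empty, `μ_S = 0` and `t` does not enter the objective).
-/

open Finset

section IndicatorSums

variable {ι : Type*} [Fintype ι] [DecidableEq ι]

lemma sum_mul_ite_mem (A : Finset ι) (c : ι → ℝ) (t : ℝ) :
    ∑ i, c i * (if i ∈ A then t else 0) = (∑ i ∈ A, c i) * t := by
  simp only [mul_ite, mul_zero, sum_ite_mem, univ_inter, sum_mul]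

lemma sum_sum_mul_ite_mem_and_mem (A : Finset ι) (w : ι → ι → ℝ) (t : ℝ) :
    ∑ i, ∑ j, w i j * (if i ∈ A ∧ j ∈ A then t else 0) = (∑ i ∈ A, ∑ j ∈ A, w i j) * t := by
  simpa only [Fintype.sum_prod_type, mem_product, sum_product]
    using sum_mul_ite_mem (A ×ˢ A) (fun x => w x.1 x.2) t

end IndicatorSums

section IndicatorPoint

variable {ι : Type*} [DecidableEq ι] (A : Finset ι) {t : ℝ}

lemma ite_mem_add_ite_mem_le (ht : 0 ≤ t) {u v : ι} (huv : ¬(u ∈ A ∧ v ∈ A)) :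
    (if u ∈ A then t else 0) + (if v ∈ A then t else 0) ≤ t := by
  split_ifs with hu hv
  exacts [absurd ⟨hu, hv⟩ huv, by linarith, by linarith, by linarith]

lemma ite_mem_and_mem_nonneg_and_le (ht : 0 ≤ t) (i j : ι) :
    0 ≤ (if i ∈ A ∧ j ∈ A then t else 0)
      ∧ (if i ∈ A ∧ j ∈ A then t else 0) ≤ (if i ∈ A then t else 0)
      ∧ (if i ∈ A ∧ j ∈ A then t else 0) ≤ (if j ∈ A then t else 0) := by
  by_cases hi : i ∈ A <;> by_cases hj : j ∈ A <;> simp [hi, hj, ht]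

lemma ite_mem_nonneg_and_le (ht : 0 ≤ t) (i : ι) :
    0 ≤ (if i ∈ A then t else 0) ∧ (if i ∈ A then t else 0) ≤ t := by
  split_ifs <;> simp [ht]

end IndicatorPoint

section FeasibleBound

variable {ι : Type*} [Fintype ι] {g f : ι → ℝ} {t μ ν : ℝ}

lemma le_inv_of_sum_mul_add_mul_eq_one (hg : ∀ i, 0 < g i) (hf : ∀ i, 0 ≤ f i) (ht : 0 ≤ t)
    (hν : 0 ≤ ν) (hnorm : ∑ i, g i * f i + t * ν = 1) (i : ι) : f i ≤ (g i)⁻¹ := by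
  have hle : g i * f i ≤ ∑ j, g j * f j :=
    single_le_sum (fun j _ => mul_nonneg (hg j).le (hf j)) (mem_univ i)
  rw [← one_div, le_div_iff₀' (hg i)]
  nlinarith [mul_nonneg ht hν]

lemma mul_le_mul_inv_of_sum_mul_add_mul_eq_one (hg : ∀ i, 0 < g i) (hf : ∀ i, 0 ≤ f i)
    (hμ : 0 ≤ μ) (hμν : μ = 0 ∨ 0 < ν) (hnorm : ∑ i, g i * f i + t * ν = 1) :
    t * μ ≤ μ * ν⁻¹ := by
  obtain rfl | hν := hμν
  · simp
  have htν : t * ν ≤ 1 := by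
    linarith [sum_nonneg fun i (_ : i ∈ univ) => mul_nonneg (hg i).le (hf i)]
  rw [mul_comm μ]
  exact mul_le_mul_of_nonneg_right (by rwa [← one_div, le_div_iff₀ hν]) hμ

lemma lp_objective_le_of_feasible {w α : ι → ι → ℝ} {d : ι → ℝ}
    (hw : ∀ i j, 0 ≤ w i j) (hd : ∀ i, 0 ≤ d i) (hg : ∀ i, 0 < g i) (hf : ∀ i, 0 ≤ f i)
    (hα : ∀ i j, α i j ≤ f i) (ht : 0 ≤ t) (hμ : 0 ≤ μ) (hν : 0 ≤ ν) (hμν : μ = 0 ∨ 0 < ν)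
    (hnorm : ∑ i, g i * f i + t * ν = 1) :
    ∑ i, ∑ j, w i j * α i j + 2 * ∑ i, d i * f i + t * μ
      ≤ ∑ i, ∑ j, w i j * (g i)⁻¹ + 2 * ∑ i, d i * (g i)⁻¹ + μ * ν⁻¹ := by
  have hf_le := le_inv_of_sum_mul_add_mul_eq_one hg hf ht hν hnorm
  have hwα : ∑ i, ∑ j, w i j * α i j ≤ ∑ i, ∑ j, w i j * (g i)⁻¹ :=
    sum_le_sum fun i _ => sum_le_sum fun j _ =>
      mul_le_mul_of_nonneg_left ((hα i j).trans (hf_le i)) (hw i j)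
  have hdf : ∑ i, d i * f i ≤ ∑ i, d i * (g i)⁻¹ :=
    sum_le_sum fun i _ => mul_le_mul_of_nonneg_left (hf_le i) (hd i)
  linarith [mul_le_mul_inv_of_sum_mul_add_mul_eq_one hg hf hμ hμν hnorm]

end FeasibleBound

lemma sum_sum_eq_zero_or_sum_pos {V : Type*} (S : Finset V) (w : V → V → ℝ) {g : V → ℝ}
    (hg : ∀ i, 0 < g i) : ∑ i ∈ S, ∑ j ∈ S, w i j = 0 ∨ 0 < ∑ i ∈ S, g i := by
  obtain rfl | hS := S.eq_empty_or_nonempty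
  · simp
  · exact .inr (sum_pos (fun i _ => hg i) hS)

theorem lp_relaxation_of_gdsp_general
    {V : Type*} [Fintype V] [DecidableEq V] (w : V → V → ℝ) (hw_nonneg : ∀ i j, 0 ≤ w i j)
    (g : V → ℝ) (hg : ∀ i, 0 < g i)
    (S : Finset V) (p : ℕ) (M : Fin p → Vp S → ℝ) (k l : Fin p → ℝ)
    (dist : Vp S → Vp S → ℝ) (d0 : ℝ)
    -- the restricted degrees d^S and the constants μ_S, ν_S
    (degS : Vp S → ℝ) (hdegS : degS = fun i => ∑ j ∈ S, w i.1 j)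
    (muS nuS : ℝ) (hmuS : muS = ∑ i ∈ S, ∑ j ∈ S, w i j) (hnuS : nuS = ∑ i ∈ S, g i)
    -- the set of objective values attained by LP-feasible points (t, f, α)
    (LPvals : Set ℝ)
    (hLPvals : LPvals = {x : ℝ | ∃ (t : ℝ) (f : Vp S → ℝ) (α : Vp S → Vp S → ℝ),
        (∀ j, t * k j ≤ (∑ i, M j i * f i) ∧ (∑ i, M j i * f i) ≤ t * l j)
        ∧ (∀ u v : Vp S, d0 < dist u v → f u + f v ≤ t)
        ∧ 0 ≤ t
        ∧ (∀ i j : Vp S, 0 ≤ α i j ∧ α i j ≤ f i ∧ α i j ≤ f j)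
        ∧ (∀ i : Vp S, 0 ≤ f i ∧ f i ≤ t)
        ∧ (∑ i, g i.1 * f i) + t * nuS = 1
        ∧ x = (∑ i, ∑ j, w i.1 j.1 * α i j) + 2 * (∑ i, degS i * f i) + t * muS})
    -- a nonempty set A ⊆ V' satisfying the skill and distance constraints
    (A : Finset (Vp S)) (hA : A.Nonempty)
    (hAk : ∀ j, k j ≤ ∑ i ∈ A, M j i) (hAl : ∀ j, (∑ i ∈ A, M j i) ≤ l j)
    (hAdist : ∀ u ∈ A, ∀ v ∈ A, dist u v ≤ d0)
    -- the associated LP point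
    (t : ℝ) (ht : t = ((∑ i ∈ A, g i.1) + nuS)⁻¹)
    (f : Vp S → ℝ) (hf : f = fun i => if i ∈ A then t else 0)
    (α : Vp S → Vp S → ℝ) (hα : α = fun i j => if i ∈ A ∧ j ∈ A then t else 0) :
    -- (t, f, α) satisfies all LP constraints
    (∀ j, t * k j ≤ (∑ i, M j i * f i) ∧ (∑ i, M j i * f i) ≤ t * l j)
    ∧ (∀ u v : Vp S, d0 < dist u v → f u + f v ≤ t)
    ∧ 0 ≤ t
    ∧ (∀ i j : Vp S, 0 ≤ α i j ∧ α i j ≤ f i ∧ α i j ≤ f j)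
    ∧ (∀ i : Vp S, 0 ≤ f i ∧ f i ≤ t)
    ∧ (∑ i, g i.1 * f i) + t * nuS = 1
    -- the LP objective at (t, f, α) equals the generalized density of A
    ∧ (∑ i, ∑ j, w i.1 j.1 * α i j) + 2 * (∑ i, degS i * f i) + t * muS
        = ((∑ i ∈ A, ∑ j ∈ A, w i.1 j.1) + 2 * (∑ i ∈ A, degS i) + muS)
            / ((∑ i ∈ A, g i.1) + nuS)
    -- consequently the LP optimal value is an upper bound on the generalized density
    ∧ ((∑ i ∈ A, ∑ j ∈ A, w i.1 j.1) + 2 * (∑ i ∈ A, degS i) + muS)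
        / ((∑ i ∈ A, g i.1) + nuS) ≤ sSup LPvals := by
  have hnuS_nonneg : 0 ≤ nuS := by
    rw [hnuS]
    exact sum_nonneg fun i _ => (hg i).le
  have hden : 0 < (∑ i ∈ A, g i.1) + nuS :=
    add_pos_of_pos_of_nonneg (sum_pos (fun i _ => hg i.1) hA) hnuS_nonneg
  have ht0 : 0 ≤ t := by
    rw [ht]
    exact (inv_pos.2 hden).le
  have hfsum (c : Vp S → ℝ) : ∑ i, c i * f i = (∑ i ∈ A, c i) * t := by
    rw [hf]
    exact sum_mul_ite_mem A c t
  have hskill : ∀ j, t * k j ≤ (∑ i, M j i * f i) ∧ (∑ i, M j i * f i) ≤ t * l j := fun j => by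
    rw [hfsum, mul_comm _ t]
    exact ⟨mul_le_mul_of_nonneg_left (hAk j) ht0, mul_le_mul_of_nonneg_left (hAl j) ht0⟩
  have hfar : ∀ u v : Vp S, d0 < dist u v → f u + f v ≤ t := fun u v huv => by
    rw [hf]
    exact ite_mem_add_ite_mem_le A ht0 fun ⟨hu, hv⟩ => (hAdist u hu v hv).not_gt huv
  have hαf : ∀ i j : Vp S, 0 ≤ α i j ∧ α i j ≤ f i ∧ α i j ≤ f j := by
    rw [hα, hf]
    exact ite_mem_and_mem_nonneg_and_le A ht0
  have hft : ∀ i : Vp S, 0 ≤ f i ∧ f i ≤ t := by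
    rw [hf]
    exact ite_mem_nonneg_and_le A ht0
  have hnorm : (∑ i, g i.1 * f i) + t * nuS = 1 := by
    rw [hfsum, mul_comm t nuS, ← add_mul, ht, mul_inv_cancel₀ hden.ne']
  have hobj : (∑ i, ∑ j, w i.1 j.1 * α i j) + 2 * (∑ i, degS i * f i) + t * muS
      = ((∑ i ∈ A, ∑ j ∈ A, w i.1 j.1) + 2 * (∑ i ∈ A, degS i) + muS)
          / ((∑ i ∈ A, g i.1) + nuS) := by
    rw [hα, sum_sum_mul_ite_mem_and_mem A (fun i j => w i.1 j.1), hfsum, ht]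
    ring
  have hbdd : BddAbove LPvals := by
    rw [hLPvals]
    refine ⟨∑ i : Vp S, ∑ j : Vp S, w i.1 j.1 * (g i.1)⁻¹ + 2 * ∑ i, degS i * (g i.1)⁻¹
      + muS * nuS⁻¹, ?_⟩
    rintro x ⟨t', f', α', -, -, ht', hα', hf', hnorm', rfl⟩
    subst hdegS hmuS hnuS
    exact lp_objective_le_of_feasible (fun i j => hw_nonneg i.1 j.1)
      (fun i => sum_nonneg fun j _ => hw_nonneg _ _) (fun i => hg i.1) (fun i => (hf' i).1)
      (fun i j => (hα' i j).2.1) ht' (sum_nonneg fun i _ => sum_nonneg fun j _ => hw_nonneg _ _)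
      hnuS_nonneg (sum_sum_eq_zero_or_sum_pos S w hg) hnorm'
  have hmem : ((∑ i ∈ A, ∑ j ∈ A, w i.1 j.1) + 2 * (∑ i ∈ A, degS i) + muS)
      / ((∑ i ∈ A, g i.1) + nuS) ∈ LPvals := by
    rw [hLPvals]
    exact ⟨t, f, α, hskill, hfar, ht0, hαf, hft, hnorm, hobj.symm⟩
  exact ⟨hskill, hfar, ht0, hαf, hft, hnorm, hobj, le_csSup hbdd hmem⟩

/-- **LP relaxation of the generalized densest subgraph problem.** For every nonempty feasible
`A ⊆ V'`, the point `t = 1/(vol_g(A) + ν_S)`, `f = t·1_A`, `α = t·1_{A×A}` satisfies all the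
LP constraints, its LP objective equals the generalized density of `A`, and consequently the
LP optimal value is an upper bound on the maximum generalized density. -/
theorem lp_relaxation_of_gdsp
    {V : Type*} [Fintype V] [DecidableEq V] (hV : Nonempty V)
    (w : V → V → ℝ) (hw_symm : ∀ i j, w i j = w j i) (hw_nonneg : ∀ i j, 0 ≤ w i j)
    (g : V → ℝ) (hg : ∀ i, 0 < g i)
    (S : Finset V) (hVp : Nonempty (Vp S))
    (p : ℕ) (hp : 1 ≤ p)
    (M : Fin p → Vp S → ℝ) (hM : ∀ j i, 0 ≤ M j i) (k l : Fin p → ℝ)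
    (dist : Vp S → Vp S → ℝ) (hdist_symm : ∀ u v, dist u v = dist v u)
    (hdist_nonneg : ∀ u v, 0 ≤ dist u v) (d0 : ℝ) (hd0 : 0 ≤ d0)
    -- the restricted degrees d^S and the constants μ_S, ν_S
    (degS : Vp S → ℝ) (hdegS : degS = fun i => ∑ j ∈ S, w i.1 j)
    (muS nuS : ℝ) (hmuS : muS = ∑ i ∈ S, ∑ j ∈ S, w i j) (hnuS : nuS = ∑ i ∈ S, g i)
    -- the set of objective values attained by LP-feasible points (t, f, α)
    (LPvals : Set ℝ)
    (hLPvals : LPvals = {x : ℝ | ∃ (t : ℝ) (f : Vp S → ℝ) (α : Vp S → Vp S → ℝ),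
        (∀ j, t * k j ≤ (∑ i, M j i * f i) ∧ (∑ i, M j i * f i) ≤ t * l j)
        ∧ (∀ u v : Vp S, d0 < dist u v → f u + f v ≤ t)
        ∧ 0 ≤ t
        ∧ (∀ i j : Vp S, 0 ≤ α i j ∧ α i j ≤ f i ∧ α i j ≤ f j)
        ∧ (∀ i : Vp S, 0 ≤ f i ∧ f i ≤ t)
        ∧ (∑ i, g i.1 * f i) + t * nuS = 1
        ∧ x = (∑ i, ∑ j, w i.1 j.1 * α i j) + 2 * (∑ i, degS i * f i) + t * muS})
    -- a nonempty set A ⊆ V' satisfying the skill and distance constraints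
    (A : Finset (Vp S)) (hA : A.Nonempty)
    (hAk : ∀ j, k j ≤ ∑ i ∈ A, M j i) (hAl : ∀ j, (∑ i ∈ A, M j i) ≤ l j)
    (hAdist : ∀ u ∈ A, ∀ v ∈ A, dist u v ≤ d0)
    -- the associated LP point
    (t : ℝ) (ht : t = ((∑ i ∈ A, g i.1) + nuS)⁻¹)
    (f : Vp S → ℝ) (hf : f = fun i => if i ∈ A then t else 0)
    (α : Vp S → Vp S → ℝ) (hα : α = fun i j => if i ∈ A ∧ j ∈ A then t else 0) :
    -- (t, f, α) satisfies all LP constraints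
    (∀ j, t * k j ≤ (∑ i, M j i * f i) ∧ (∑ i, M j i * f i) ≤ t * l j)
    ∧ (∀ u v : Vp S, d0 < dist u v → f u + f v ≤ t)
    ∧ 0 ≤ t
    ∧ (∀ i j : Vp S, 0 ≤ α i j ∧ α i j ≤ f i ∧ α i j ≤ f j)
    ∧ (∀ i : Vp S, 0 ≤ f i ∧ f i ≤ t)
    ∧ (∑ i, g i.1 * f i) + t * nuS = 1
    -- the LP objective at (t, f, α) equals the generalized density of A
    ∧ (∑ i, ∑ j, w i.1 j.1 * α i j) + 2 * (∑ i, degS i * f i) + t * muS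
        = ((∑ i ∈ A, ∑ j ∈ A, w i.1 j.1) + 2 * (∑ i ∈ A, degS i) + muS)
            / ((∑ i ∈ A, g i.1) + nuS)
    -- consequently the LP optimal value is an upper bound on the generalized density
    ∧ ((∑ i ∈ A, ∑ j ∈ A, w i.1 j.1) + 2 * (∑ i ∈ A, degS i) + muS)
        / ((∑ i ∈ A, g i.1) + nuS) ≤ sSup LPvals :=
  lp_relaxation_of_gdsp_general w hw_nonneg g hg S p M k l dist d0 degS hdegS muS nuS hmuS hnuS
    LPvals hLPvals A hA hAk hAl hAdist t ht f hf α hα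
end
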